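/- arXiv:1811.12548 — 6 statements merged into one kernel-verified Lean document; each statement's English description precedes it below -/
import Mathlib

section
/- For every convex body K in ℝ^n there exists a point x ∈ ℝ^n such that |K ∩ (x−K)| ≥ 2^{−n} |K|. In particular, the Kövner–Besicovitch symmetry measure Δ_KB(K) = max_x |K ∩ (x−K)| / |K| satisfies Δ_KB(K) ≥ 2^{−n}. -/
open MeasureTheory Pointwise ENNReal

/-- For every convex body `K ⊆ ℝⁿ` there is a point `x` with
`|K ∩ (x − K)| ≥ 2^{-n} |K|`; in particular the Kövner-Besicovitch symmetry
measure of `K` is at least `2^{-n}`. -/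
theorem kovner_besicovitch_lower_bound
    (n : ℕ) (K : Set (EuclideanSpace ℝ (Fin n)))
    (hKcomp : IsCompact K) (hKconv : Convex ℝ K) (hKint : (interior K).Nonempty) :
    ∃ x : EuclideanSpace ℝ (Fin n),
      volume K ≤ 2 ^ n * volume (K ∩ ((fun a => x - a) '' K)) := by
  have hK : MeasurableSet K := hKcomp.measurableSet
  have hKne : volume K ≠ 0 :=
    (Measure.measure_pos_of_nonempty_interior _ hKint).ne'
  have hKfin : volume K ≠ ⊤ := hKcomp.measure_lt_top.ne
  -- image equals preimage under the involution `a ↦ x - a`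
  have himg : ∀ x : EuclideanSpace ℝ (Fin n), ((fun a => x - a) '' K) = (fun a => x - a) ⁻¹' K := by
    intro x
    ext y
    constructor
    · rintro ⟨a, ha, rfl⟩
      simpa using ha
    · intro hy
      exact ⟨x - y, hy, by module⟩
  set f : EuclideanSpace ℝ (Fin n) → ℝ≥0∞ := fun x => volume (K ∩ (fun a => x - a) ⁻¹' K) with hf
  -- f as an lintegral of an indicator product
  have hind : ∀ x y : EuclideanSpace ℝ (Fin n),
      K.indicator (1 : EuclideanSpace ℝ (Fin n) → ℝ≥0∞) y * K.indicator 1 (x - y)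
        = (K ∩ (fun a => x - a) ⁻¹' K).indicator 1 y := by
    intro x y
    by_cases h1 : y ∈ K <;> by_cases h2 : x - y ∈ K <;>
      simp [Set.indicator_apply, h1, h2]
  have hmeas_pre : ∀ x : EuclideanSpace ℝ (Fin n), MeasurableSet ((fun a => x - a) ⁻¹' K) := fun x =>
    hK.preimage (measurable_const.sub measurable_id)
  have hfx : ∀ x, f x = ∫⁻ y, K.indicator 1 y * K.indicator 1 (x - y) := by
    intro x
    simp only [hind]
    rw [lintegral_indicator_one (hK.inter (hmeas_pre x))]
  -- measurability of everything in sight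
  have hmeas2 : Measurable fun p : EuclideanSpace ℝ (Fin n) × EuclideanSpace ℝ (Fin n) =>
      K.indicator (1 : EuclideanSpace ℝ (Fin n) → ℝ≥0∞) p.2 * K.indicator 1 (p.1 - p.2) := by
    exact ((measurable_const.indicator hK).comp measurable_snd).mul
      ((measurable_const.indicator hK).comp (measurable_fst.sub measurable_snd))
  have hfmeas : Measurable f := by
    have : Measurable fun x => ∫⁻ y, K.indicator (1 : EuclideanSpace ℝ (Fin n) → ℝ≥0∞) y * K.indicator 1 (x - y) :=
      hmeas2.lintegral_prod_right'
    simpa only [← hfx] using this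
  -- total integral of f is (volume K)^2
  have htot : ∫⁻ x, f x = volume K * volume K := by
    simp only [hfx]
    rw [lintegral_lintegral_swap hmeas2.aemeasurable]
    have : ∀ y : EuclideanSpace ℝ (Fin n), ∫⁻ x, K.indicator (1 : EuclideanSpace ℝ (Fin n) → ℝ≥0∞) y * K.indicator 1 (x - y)
        = K.indicator 1 y * volume K := by
      intro y
      by_cases hy : y ∈ K
      · simp only [Set.indicator_of_mem hy, Pi.one_apply, one_mul]
        rw [lintegral_sub_right_eq_self (K.indicator 1) y, lintegral_indicator_one hK]
      · simp [Set.indicator_of_notMem hy]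
    simp only [this]
    have h2 : ∀ y, K.indicator (1 : EuclideanSpace ℝ (Fin n) → ℝ≥0∞) y * volume K
        = K.indicator (fun _ => volume K) y := by
      intro y
      by_cases hy : y ∈ K <;> simp [hy]
    simp only [h2]
    rw [lintegral_indicator hK, setLIntegral_const]
  -- support of f lies in 2 • K
  have h2K : (2 : ℝ) • K = K + K := by
    rw [show (2 : ℝ) = 1 + 1 by norm_num, hKconv.add_smul zero_le_one zero_le_one, one_smul]
  have hsupp : ∀ x : EuclideanSpace ℝ (Fin n), f x ≠ 0 → x ∈ (2 : ℝ) • K := by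
    intro x hx
    have hne : (K ∩ (fun a => x - a) ⁻¹' K).Nonempty := by
      by_contra h
      rw [Set.not_nonempty_iff_eq_empty] at h
      exact hx (by simp [hf, h])
    obtain ⟨y, hy, hxy⟩ := hne
    rw [h2K]
    exact ⟨y, hy, x - y, hxy, by module⟩
  have hScomp : IsCompact ((2 : ℝ) • K) := hKcomp.smul (2 : ℝ)
  have hS : MeasurableSet ((2 : ℝ) • K) := hScomp.measurableSet
  have hvolS : volume ((2 : ℝ) • K) = 2 ^ n * volume K := by
    rw [Measure.addHaar_smul]
    congr 1
    rw [finrank_euclideanSpace_fin]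
    simp [abs_of_nonneg, ENNReal.ofReal_pow]
  -- main argument, by contradiction
  by_contra hcon
  push_neg at hcon
  have hpow0 : (2 : ℝ≥0∞) ^ n ≠ 0 := by positivity
  have hpowt : (2 : ℝ≥0∞) ^ n ≠ ⊤ := by
    exact ENNReal.pow_ne_top (by norm_num)
  set c : ℝ≥0∞ := volume K / 2 ^ n with hc
  have hflt : ∀ x, f x < c := by
    intro x
    have := hcon x
    rw [himg x] at this
    rw [hc, ENNReal.lt_div_iff_mul_lt (Or.inl hpow0) (Or.inl hpowt), mul_comm]
    exact this
  have hSne : volume ((2 : ℝ) • K) ≠ 0 := by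
    rw [hvolS]
    exact mul_ne_zero hpow0 hKne
  have hcS : c * volume ((2 : ℝ) • K) = volume K * volume K := by
    rw [hvolS, hc, div_eq_mul_inv,
      show volume K * ((2 : ℝ≥0∞) ^ n)⁻¹ * (2 ^ n * volume K)
        = ((2 : ℝ≥0∞) ^ n)⁻¹ * 2 ^ n * (volume K * volume K) by ring,
      ENNReal.inv_mul_cancel hpow0 hpowt, one_mul]
  -- split the integral
  have hsplit : ∫⁻ x, f x = ∫⁻ x in (2 : ℝ) • K, f x := by
    rw [← lintegral_add_compl f hS]
    have hzero : ∫⁻ x in ((2 : ℝ) • K)ᶜ, f x = 0 := by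
      rw [lintegral_eq_zero_iff hfmeas]
      filter_upwards [ae_restrict_mem hS.compl] with x hx
      by_contra h
      exact hx (hsupp x h)
    rw [hzero, add_zero]
  have hfinint : ∫⁻ x in (2 : ℝ) • K, f x ≠ ⊤ := by
    rw [← hsplit, htot]
    exact ENNReal.mul_ne_top hKfin hKfin
  have hlt : ∫⁻ x in (2 : ℝ) • K, f x < ∫⁻ _x in (2 : ℝ) • K, c :=
    setLIntegral_strict_mono hS hSne measurable_const hfinint
      (Filter.Eventually.of_forall fun x _ => hflt x)
  rw [setLIntegral_const, hcS, ← hsplit, htot] at hlt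
  exact lt_irrefl _ hlt
end

section
/- Let A, B ⊆ ℝ^n be convex bodies with 0 in the interior of B. Then the covering number of A by translates of B centered in A satisfies N̄(A,B) ≤ 2^n · |A + ½(B ∩ (−B))| / |B ∩ (−B)|. -/
open MeasureTheory Pointwise ENNReal NNReal

set_option linter.unusedVariables false in
/-- The covering number of `A` by translates of `B` centered in `A` is at most
`2^n |A + ½(B ∩ (−B))| / |B ∩ (−B)|`. -/
theorem coveringIn_volume_bound
    (n : ℕ) (A B : Set (EuclideanSpace ℝ (Fin n)))
    (hAcomp : IsCompact A) (hAconv : Convex ℝ A) (hAint : (interior A).Nonempty)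
    (hBcomp : IsCompact B) (hBconv : Convex ℝ B) (hBint : (interior B).Nonempty)
    (h0B : 0 ∈ interior B) :
    ∃ s : Finset (EuclideanSpace ℝ (Fin n)), ↑s ⊆ A ∧ A ⊆ ⋃ x ∈ s, x +ᵥ B ∧
      (s.card : ℝ≥0∞) * volume (B ∩ -B)
        ≤ 2 ^ n * volume (A + (2 : ℝ)⁻¹ • (B ∩ -B)) := by
  classical
  set C : Set (EuclideanSpace ℝ (Fin n)) := B ∩ -B with hC
  set h : Set (EuclideanSpace ℝ (Fin n)) := (2 : ℝ)⁻¹ • C with hh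
  have hCconv : Convex ℝ C := hBconv.inter hBconv.neg
  have hCcomp : IsCompact C := hBcomp.inter_right hBcomp.neg.isClosed
  have hCsymm : ∀ x ∈ C, -x ∈ C := by
    rintro x ⟨hx1, hx2⟩
    exact ⟨Set.mem_neg.mp hx2, by simpa using hx1⟩
  have h0C : (0 : EuclideanSpace ℝ (Fin n)) ∈ interior C := by
    rw [hC, interior_inter]
    refine ⟨h0B, ?_⟩
    have hsub : -interior B ⊆ interior (-B) :=
      interior_maximal (Set.neg_subset_neg.mpr interior_subset) isOpen_interior.neg
    exact hsub (by simpa using h0B)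
  have hmid : ∀ c₁ ∈ C, ∀ c₂ ∈ C, (2:ℝ)⁻¹ • c₁ + (2:ℝ)⁻¹ • c₂ ∈ C := by
    intro c₁ h1 c₂ h2
    exact hCconv h1 h2 (by norm_num) (by norm_num) (by norm_num)
  have hkey : ∀ x a : EuclideanSpace ℝ (Fin n), ¬ Disjoint (x +ᵥ h) (a +ᵥ h) → a - x ∈ C := by
    intro x a hnd
    obtain ⟨z, hz1, hz2⟩ := Set.not_disjoint_iff.mp hnd
    obtain ⟨u, hu, rfl⟩ := hz1
    obtain ⟨v, hv, hva⟩ := hz2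
    obtain ⟨c₁, hc1, rfl⟩ := hu
    obtain ⟨c₂, hc2, rfl⟩ := hv
    have hva' : a + (2:ℝ)⁻¹ • c₂ = x + (2:ℝ)⁻¹ • c₁ := hva
    have ha : a = x + (2:ℝ)⁻¹ • c₁ - (2:ℝ)⁻¹ • c₂ := by
      rw [eq_sub_iff_add_eq]; exact hva'
    have : a - x = (2:ℝ)⁻¹ • c₁ + (2:ℝ)⁻¹ • (-c₂) := by
      rw [ha, smul_neg]; abel
    rw [this]
    exact hmid c₁ hc1 (-c₂) (hCsymm c₂ hc2)
  set S : Set (Set (EuclideanSpace ℝ (Fin n))) :=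
    {s | s ⊆ A ∧ s.PairwiseDisjoint (fun x => x +ᵥ h)} with hS
  obtain ⟨M, hMS, hMmax⟩ := zorn_subset S (by
    intro c hcS hchain
    refine ⟨⋃₀ c, ⟨?_, ?_⟩, fun s hs => Set.subset_sUnion_of_mem hs⟩
    · exact Set.sUnion_subset fun s hs => (hcS hs).1
    · intro x hx y hy hxy
      obtain ⟨s, hs, hxs⟩ := hx
      obtain ⟨t, ht, hyt⟩ := hy
      rcases hchain.total hs ht with hst | hts
      · exact (hcS ht).2 (hst hxs) hyt hxy
      · exact (hcS hs).2 hxs (hts hyt) hxy)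
  obtain ⟨hMA, hMdisj⟩ := hMS
  have hMfin : M.Finite := by
    obtain ⟨ε, hε, hball⟩ := Metric.mem_nhds_iff.mp (mem_interior_iff_mem_nhds.mp h0C)
    obtain ⟨t, htfin, htcov⟩ :=
      Metric.totallyBounded_iff.mp hAcomp.totallyBounded (ε/2) (by linarith)
    have hsep : ∀ x ∈ M, ∀ y ∈ M, x ≠ y → ε ≤ dist x y := by
      intro x hx y hy hxy
      by_contra hlt
      push_neg at hlt
      have hyx : y - x ∈ C := hball (by
        simp only [Metric.mem_ball, dist_zero_right]
        rw [← dist_eq_norm, dist_comm]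
        exact hlt)
      have hxy' : x - y ∈ C := by simpa using hCsymm _ hyx
      have hnd : ¬ Disjoint (x +ᵥ h) (y +ᵥ h) := by
        rw [Set.not_disjoint_iff]
        refine ⟨x + (2:ℝ)⁻¹ • (y - x), ⟨_, ⟨_, hyx, rfl⟩, rfl⟩, ⟨_, ⟨_, hxy', rfl⟩, ?_⟩⟩
        show y + (2:ℝ)⁻¹ • (x - y) = x + (2:ℝ)⁻¹ • (y - x)
        module
      exact hnd (hMdisj hx hy hxy)
    have hcov : ∀ m ∈ M, ∃ y ∈ t, m ∈ Metric.ball y (ε/2) := by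
      intro m hm
      simpa using htcov (hMA hm)
    choose f hf hfb using hcov
    set g : EuclideanSpace ℝ (Fin n) → EuclideanSpace ℝ (Fin n) :=
      fun m => if hm : m ∈ M then f m hm else 0 with hg
    apply Set.Finite.of_finite_image (f := g)
    · exact htfin.subset (by
        rintro _ ⟨m, hm, rfl⟩
        simp only [hg, dif_pos hm]
        exact hf m hm)
    · intro x hx y hy hgxy
      by_contra hxy
      have h1 := hfb x hx
      have h2 := hfb y hy
      simp only [hg, dif_pos hx, dif_pos hy] at hgxy
      rw [hgxy] at h1
      have hlt : dist x y < ε := by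
        calc dist x y ≤ dist x (f y hy) + dist (f y hy) y := dist_triangle _ _ _
        _ < ε/2 + ε/2 := by
            rw [Metric.mem_ball] at h1 h2
            rw [dist_comm (f y hy) y]
            exact add_lt_add h1 h2
        _ = ε := by ring
      exact absurd (hsep x hx y hy hxy) (not_le.mpr hlt)
  refine ⟨hMfin.toFinset, by rw [hMfin.coe_toFinset]; exact hMA, ?_, ?_⟩
  · intro a ha
    by_cases haM : a ∈ M
    · refine Set.mem_biUnion (hMfin.mem_toFinset.mpr haM) ?_
      exact ⟨0, interior_subset h0B, by simp⟩
    · have hins : insert a M ∉ S := by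
        intro hmem
        exact haM (hMmax hmem (Set.subset_insert a M) (Set.mem_insert a M))
      have hnpd : ¬ (insert a M).PairwiseDisjoint (fun x => x +ᵥ h) := by
        intro hpd
        exact hins ⟨Set.insert_subset ha hMA, hpd⟩
      rw [Set.pairwiseDisjoint_insert] at hnpd
      push_neg at hnpd
      obtain ⟨x, hxM, hax, hnd⟩ := hnpd hMdisj
      have hax' : a - x ∈ C := hkey x a (fun hd => hnd hd.symm)
      refine Set.mem_biUnion (hMfin.mem_toFinset.mpr hxM) ?_
      exact ⟨a - x, hax'.1, by simp⟩
  · have hhmeas : MeasurableSet h := (hCcomp.smul (2:ℝ)⁻¹).isClosed.measurableSet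
    have hdisjs : (↑hMfin.toFinset : Set (EuclideanSpace ℝ (Fin n))).PairwiseDisjoint
        (fun x => x +ᵥ h) := by
      rw [hMfin.coe_toFinset]; exact hMdisj
    have hsum : volume (⋃ x ∈ hMfin.toFinset, x +ᵥ h) = ∑ x ∈ hMfin.toFinset, volume (x +ᵥ h) :=
      measure_biUnion_finset hdisjs (fun b _ => hhmeas.const_vadd b)
    have hsub : (⋃ x ∈ hMfin.toFinset, x +ᵥ h) ⊆ A + h := by
      intro z hz
      simp only [Set.mem_iUnion] at hz
      obtain ⟨x, hx, hz⟩ := hz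
      obtain ⟨u, hu, rfl⟩ := hz
      exact Set.add_mem_add (hMA (hMfin.mem_toFinset.mp hx)) hu
    have hvol_h : volume h = ENNReal.ofReal ((2:ℝ)⁻¹ ^ n) * volume C := by
      rw [hh, Measure.addHaar_smul]
      congr 2
      rw [finrank_euclideanSpace_fin, abs_of_pos (by positivity)]
    have hsum' : (hMfin.toFinset.card : ℝ≥0∞) * volume h ≤ volume (A + h) := by
      calc (hMfin.toFinset.card : ℝ≥0∞) * volume h
          = ∑ x ∈ hMfin.toFinset, volume (x +ᵥ h) := by
            simp [measure_vadd, Finset.sum_const, nsmul_eq_mul]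
        _ = volume (⋃ x ∈ hMfin.toFinset, x +ᵥ h) := hsum.symm
        _ ≤ volume (A + h) := measure_mono hsub
    have h2 : (2:ℝ≥0∞)^n * (2:ℝ≥0∞)⁻¹^n = 1 := by
      rw [← mul_pow, ENNReal.mul_inv_cancel (by norm_num) (by norm_num), one_pow]
    calc (hMfin.toFinset.card : ℝ≥0∞) * volume C
        = 2^n * ((hMfin.toFinset.card : ℝ≥0∞) * volume h) := by
          rw [hvol_h]
          rw [ENNReal.ofReal_pow (by norm_num), ENNReal.ofReal_inv_of_pos (by norm_num),
            ENNReal.ofReal_ofNat]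
          rw [show (2:ℝ≥0∞)^n * ((hMfin.toFinset.card : ℝ≥0∞) * ((2:ℝ≥0∞)⁻¹^n * volume C))
              = ((2:ℝ≥0∞)^n * (2:ℝ≥0∞)⁻¹^n) * ((hMfin.toFinset.card : ℝ≥0∞) * volume C) from by
            ring, h2, one_mul]
      _ ≤ 2^n * volume (A + h) := mul_le_mul_right hsum' _
end

section
/- Let K, T ⊆ ℝ^n be convex bodies. Then the fractional covering number satisfies N_ω(K, T) ≤ |K − T| / |T|. -/
/-!
Put weight `δⁿ / |U|` on every point of the lattice `δℤⁿ` lying in `K - T`, where `U` is the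
image of `T` under a homothety of ratio `1 - δ√n / r` centred at a ball `B(t₀, r) ⊆ T`; by
convexity the `δ√n`-neighbourhood of `U` stays inside `T`. For `x ∈ K`, every lattice cube
meeting `x - U` has its corner in `x - T`, so at least `|U| / δⁿ` of the translates cover `x`.
The disjoint cubes at the chosen lattice points lie in the `δ√n`-neighbourhood of `K - T`,
so the total weight is at most `|(K - T)_{δ√n}| / |U|`, which tends to `|K - T| / |T|`.
-/

open MeasureTheory Pointwise ENNReal NNReal

/-- The fractional covering number of `K` by translates of `T`: the infimal total
weight of a finite weighted family of translates of `T` covering `K` fractionally. -/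
noncomputable def fracCover {n : ℕ} (K T : Set (EuclideanSpace ℝ (Fin n))) : ℝ≥0∞ :=
  sInf {w : ℝ≥0∞ | ∃ S : Finset ((EuclideanSpace ℝ (Fin n)) × ℝ≥0),
    (∀ p ∈ S, (0 : ℝ≥0) < p.2) ∧
    (∀ x ∈ K, (1 : ℝ) ≤ ∑ p ∈ S, (p.2 : ℝ) * (p.1 +ᵥ T).indicator 1 x) ∧
    w = ∑ p ∈ S, (p.2 : ℝ≥0∞)}

open Metric Filter Topology
open scoped Finset

theorem EuclideanSpace.dist_le_mul_sqrt_card {ι : Type*} [Fintype ι]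
    {z w : EuclideanSpace ℝ ι} {c : ℝ} (hc : 0 ≤ c) (h : ∀ i, |z i - w i| ≤ c) :
    dist z w ≤ c * √(Fintype.card ι) := by
  rw [EuclideanSpace.dist_eq, ← Real.sqrt_sq hc, ← Real.sqrt_mul (sq_nonneg c)]
  refine Real.sqrt_le_sqrt ?_
  calc ∑ i, dist (z i) (w i) ^ 2 ≤ Finset.univ.card • c ^ 2 :=
        Finset.sum_le_card_nsmul _ _ _ fun i _ => pow_le_pow_left₀ dist_nonneg (h i) 2
    _ = c ^ 2 * Fintype.card ι := by rw [nsmul_eq_mul, Finset.card_univ, mul_comm]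

theorem Convex.closedBall_subset_of_mem_homothety {E : Type*} [NormedAddCommGroup E]
    [NormedSpace ℝ E] {T : Set E} (hT : Convex ℝ T) {t₀ : E} {r c : ℝ} (hr : 0 ≤ r)
    (hball : closedBall t₀ r ⊆ T) (hc₀ : 0 ≤ c) (hc₁ : c ≤ 1) {y : E}
    (hy : y ∈ AffineMap.homothety t₀ (1 - c) '' T) : closedBall y (c * r) ⊆ T := by
  obtain ⟨t, ht, rfl⟩ := hy
  intro z hz
  have hball' : c • t₀ + (z - AffineMap.homothety t₀ (1 - c) t) ∈ c • T := by
    refine Set.smul_set_mono hball ?_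
    rw [smul_closedBall _ _ hr, mem_closedBall, dist_eq_norm, Real.norm_of_nonneg hc₀]
    simpa [← dist_eq_norm] using hz
  convert hT.set_combo_subset (sub_nonneg.2 hc₁) hc₀ (sub_add_cancel 1 c)
    (Set.add_mem_add (Set.smul_mem_smul_set ht) hball') using 1
  simp only [AffineMap.homothety_apply, vsub_eq_sub, vadd_eq_add]
  module

theorem tendsto_measure_cthickening_div {α : Type*} [MetricSpace α] [MeasurableSpace α]
    [OpensMeasurableSpace α] [ProperSpace α] {μ : Measure α} [IsFiniteMeasureOnCompacts μ]
    {D : Set α} (hD : IsCompact D) (r : ℝ) (k : ℕ) {a : ℝ≥0∞} (ha₀ : a ≠ 0) (ha : a ≠ ⊤) :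
    Tendsto (fun ε => μ (cthickening ε D) / (ENNReal.ofReal ((1 - ε / r) ^ k) * a)) (𝓝 0)
      (𝓝 (μ D / a)) := by
  have hshrink : Tendsto (fun ε : ℝ => ENNReal.ofReal ((1 - ε / r) ^ k)) (𝓝 0) (𝓝 1) := by
    have hcont : Continuous fun ε : ℝ => ENNReal.ofReal ((1 - ε / r) ^ k) :=
      ENNReal.continuous_ofReal.comp (by fun_prop)
    simpa using hcont.tendsto 0
  refine ENNReal.Tendsto.div (tendsto_measure_cthickening_of_isCompact hD) (Or.inr ha₀) ?_
    (Or.inl ha)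
  simpa using ENNReal.Tendsto.mul_const hshrink (Or.inr ha)

variable {n : ℕ}

open Classical in
theorem fracCover_le_card_mul {ι : Type*} {K T : Set (EuclideanSpace ℝ (Fin n))}
    (S : Finset ι) {p : ι → EuclideanSpace ℝ (Fin n)} (hp : Set.InjOn p S) {w : ℝ≥0∞}
    (hw₀ : w ≠ 0) (hw : w ≠ ⊤) (hcover : ∀ x ∈ K, 1 ≤ #{i ∈ S | x ∈ p i +ᵥ T} * w) :
    fracCover K T ≤ #S * w := by
  have hinj : Set.InjOn (fun i => (p i, w.toNNReal)) S :=
    fun i hi j hj h => hp hi hj (congr_arg Prod.fst h)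
  refine sInf_le ⟨S.image fun i => (p i, w.toNNReal), ?_, fun x hx => ?_, ?_⟩
  · simp [ENNReal.toNNReal_pos hw₀ hw]
  · rw [Finset.sum_image hinj]
    have := ENNReal.toReal_mono (by finiteness) (hcover x hx)
    simpa [Set.indicator_apply, Finset.sum_ite, ENNReal.coe_toNNReal_eq_toReal, mul_comm]
      using this
  · rw [Finset.sum_image hinj]
    simp [ENNReal.coe_toNNReal hw]

def gridPoint (δ : ℝ) (m : Fin n → ℤ) : EuclideanSpace ℝ (Fin n) :=
  WithLp.toLp 2 fun i => δ * m i

def gridCube (δ : ℝ) (m : Fin n → ℤ) : Set (EuclideanSpace ℝ (Fin n)) :=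
  {z | ∀ i, z i ∈ Set.Ico (δ * m i) (δ * m i + δ)}

noncomputable def gridIndex (δ : ℝ) (z : EuclideanSpace ℝ (Fin n)) : Fin n → ℤ :=
  fun i => ⌊z i / δ⌋

section Grid

variable {δ : ℝ} {m : Fin n → ℤ} {z : EuclideanSpace ℝ (Fin n)}

theorem gridIndex_eq_iff_mem_gridCube (hδ : 0 < δ) :
    gridIndex δ z = m ↔ z ∈ gridCube δ m := by
  simp only [gridIndex, gridCube, funext_iff, Set.mem_ofPred_eq, Set.mem_Ico, Int.floor_eq_iff,
    le_div_iff₀ hδ, div_lt_iff₀ hδ]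
  refine forall_congr' fun i => ?_
  constructor <;> rintro ⟨h₁, h₂⟩ <;> constructor <;> linarith

theorem mem_gridCube_gridIndex (hδ : 0 < δ) (z : EuclideanSpace ℝ (Fin n)) :
    z ∈ gridCube δ (gridIndex δ z) :=
  (gridIndex_eq_iff_mem_gridCube hδ).1 rfl

theorem pairwiseDisjoint_gridCube (hδ : 0 < δ) (s : Set (Fin n → ℤ)) :
    s.PairwiseDisjoint (gridCube δ) :=
  fun _ _ _ _ hab => Set.disjoint_left.2 fun _ ha hb =>
    hab <| ((gridIndex_eq_iff_mem_gridCube hδ).2 ha).symm.trans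
      ((gridIndex_eq_iff_mem_gridCube hδ).2 hb)

theorem gridPoint_injective (hδ : 0 < δ) : Function.Injective (gridPoint (n := n) δ) :=
  Function.LeftInverse.injective (g := gridIndex δ) fun m =>
    (gridIndex_eq_iff_mem_gridCube hδ).2 fun i => by simp [gridPoint, hδ]

theorem gridCube_eq_preimage (δ : ℝ) (m : Fin n → ℤ) :
    gridCube δ m = (MeasurableEquiv.toLp 2 (Fin n → ℝ)).symm ⁻¹'
      Set.univ.pi fun i => Set.Ico (δ * m i) (δ * m i + δ) := by
  ext z
  simp [gridCube]

theorem measurableSet_gridCube (δ : ℝ) (m : Fin n → ℤ) : MeasurableSet (gridCube δ m) := by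
  rw [gridCube_eq_preimage]
  exact (MeasurableEquiv.symm _).measurable (MeasurableSet.univ_pi fun _ => measurableSet_Ico)

theorem volume_gridCube (hδ : 0 ≤ δ) (m : Fin n → ℤ) :
    volume (gridCube δ m) = ENNReal.ofReal (δ ^ n) := by
  rw [gridCube_eq_preimage, (EuclideanSpace.volume_preserving_symm_measurableEquiv_toLp
    (Fin n)).measure_preimage_equiv, volume_pi_pi]
  simp [Real.volume_Ico, ENNReal.ofReal_pow hδ]

theorem dist_gridPoint_le (hδ : 0 ≤ δ) (hz : z ∈ gridCube δ m) :
    dist z (gridPoint δ m) ≤ δ * √n := by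
  refine (EuclideanSpace.dist_le_mul_sqrt_card hδ fun i => ?_).trans_eq (by simp)
  have hzi := hz i
  simp only [gridPoint, PiLp.toLp_apply, abs_le, Set.mem_Ico] at hzi ⊢
  constructor <;> linarith [hzi.1, hzi.2]

open Classical in
theorem volume_le_card_filter_gridPoint_mem (hδ : 0 < δ)
    {A B : Set (EuclideanSpace ℝ (Fin n))} (F : Finset (Fin n → ℤ))
    (hBF : ∀ m, gridPoint δ m ∈ B → m ∈ F)
    (hAB : ∀ a ∈ A, ∀ b, dist a b ≤ δ * √n → b ∈ B) :
    volume A ≤ #{m ∈ F | gridPoint δ m ∈ B} * ENNReal.ofReal (δ ^ n) := by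
  have hcover : A ⊆ ⋃ m ∈ {m ∈ F | gridPoint δ m ∈ B}, gridCube δ m := fun a ha => by
    have hB := hAB a ha _ (dist_gridPoint_le hδ.le (mem_gridCube_gridIndex hδ a))
    exact Set.mem_biUnion (Finset.mem_filter.2 ⟨hBF _ hB, hB⟩) (mem_gridCube_gridIndex hδ a)
  calc volume A ≤ ∑ m ∈ {m ∈ F | gridPoint δ m ∈ B}, volume (gridCube δ m) :=
        (measure_mono hcover).trans (measure_biUnion_finset_le _ _)
    _ = _ := by simp [volume_gridCube hδ.le]

theorem card_mul_le_volume_cthickening (hδ : 0 < δ) {B : Set (EuclideanSpace ℝ (Fin n))}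
    (F : Finset (Fin n → ℤ)) (hF : ∀ m ∈ F, gridPoint δ m ∈ B) :
    #F * ENNReal.ofReal (δ ^ n) ≤ volume (cthickening (δ * √n) B) :=
  calc #F * ENNReal.ofReal (δ ^ n) = ∑ m ∈ F, volume (gridCube δ m) := by
        simp [volume_gridCube hδ.le]
    _ = volume (⋃ m ∈ F, gridCube δ m) :=
        (measure_biUnion_finset (pairwiseDisjoint_gridCube hδ _)
          fun m _ => measurableSet_gridCube δ m).symm
    _ ≤ _ := measure_mono <| Set.iUnion₂_subset fun m hm z hz =>
        mem_cthickening_of_dist_le z _ _ _ (hF m hm) (dist_gridPoint_le hδ.le hz)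

theorem finite_setOf_gridPoint_mem (hδ : 0 < δ) {B : Set (EuclideanSpace ℝ (Fin n))}
    (hB : Bornology.IsBounded B) : {m | gridPoint δ m ∈ B}.Finite := by
  by_contra hinf
  have hcube : ENNReal.ofReal (δ ^ n) ≠ 0 := (ENNReal.ofReal_pos.2 (pow_pos hδ n)).ne'
  obtain ⟨N, hN⟩ := ENNReal.exists_nat_gt
    (ENNReal.div_ne_top (hB.cthickening.measure_lt_top (μ := volume)).ne hcube)
  obtain ⟨F, hFB, rfl⟩ := Set.Infinite.exists_subset_card_eq hinf N
  rw [ENNReal.div_lt_iff (Or.inl hcube) (Or.inl ENNReal.ofReal_ne_top)] at hN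
  exact (hN.trans_le (card_mul_le_volume_cthickening hδ F fun m hm => hFB hm)).false

end Grid

open Classical in
theorem volume_le_card_filter_mem_gridPoint_vadd {δ : ℝ} (hδ : 0 < δ)
    {K T U : Set (EuclideanSpace ℝ (Fin n))} (hU : ∀ y ∈ U, closedBall y (δ * √n) ⊆ T)
    (S : Finset (Fin n → ℤ)) (hS : ∀ m, gridPoint δ m ∈ K - T → m ∈ S) {x} (hx : x ∈ K) :
    volume U ≤ #{m ∈ S | x ∈ gridPoint δ m +ᵥ T} * ENNReal.ofReal (δ ^ n) := by
  have hreflect : (x - ·) ⁻¹' U = -((x + ·) ⁻¹' U) := by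
    ext
    simp [sub_eq_add_neg]
  rw [← measure_preimage_add volume x, ← Measure.measure_neg, ← hreflect]
  refine volume_le_card_filter_gridPoint_mem hδ (A := (x - ·) ⁻¹' U) (B := {p | x ∈ p +ᵥ T}) S
    (fun m hm => hS m ?_) fun a ha b hab => ?_
  · obtain ⟨t, ht, hmt⟩ := Set.mem_vadd_set.1 hm
    rw [eq_sub_of_add_eq hmt]
    exact Set.sub_mem_sub hx ht
  · refine Set.mem_vadd_set.2 ⟨x - b, hU _ ha ?_, by simp⟩
    rwa [mem_closedBall, dist_sub_left, dist_comm]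

open Classical in
theorem fracCover_le_volume_cthickening_div {K T U : Set (EuclideanSpace ℝ (Fin n))}
    (hKT : Bornology.IsBounded (K - T)) {δ : ℝ} (hδ : 0 < δ)
    (hU : ∀ y ∈ U, closedBall y (δ * √n) ⊆ T) (hU₀ : volume U ≠ 0) (hU_top : volume U ≠ ⊤) :
    fracCover K T ≤ volume (cthickening (δ * √n) (K - T)) / volume U := by
  have hfin := finite_setOf_gridPoint_mem hδ hKT
  have hw₀ : ENNReal.ofReal (δ ^ n) / volume U ≠ 0 :=
    (ENNReal.div_pos (ENNReal.ofReal_pos.2 (pow_pos hδ n)).ne' hU_top).ne'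
  have hcover (x) (hx : x ∈ K) :
      (1 : ℝ≥0∞) ≤
        #{m ∈ hfin.toFinset | x ∈ gridPoint δ m +ᵥ T} * (ENNReal.ofReal (δ ^ n) / volume U) := by
    rw [← mul_div_assoc, ENNReal.le_div_iff_mul_le (Or.inl hU₀) (Or.inl hU_top), one_mul]
    exact volume_le_card_filter_mem_gridPoint_vadd hδ hU _ (fun _ => hfin.mem_toFinset.2) hx
  calc fracCover K T ≤ #hfin.toFinset * (ENNReal.ofReal (δ ^ n) / volume U) :=
        fracCover_le_card_mul _ (gridPoint_injective hδ).injOn hw₀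
          (ENNReal.div_ne_top ENNReal.ofReal_ne_top hU₀) hcover
    _ = #hfin.toFinset * ENNReal.ofReal (δ ^ n) / volume U := (mul_div_assoc ..).symm
    _ ≤ _ := by
        gcongr
        exact card_mul_le_volume_cthickening hδ _ fun _ => hfin.mem_toFinset.1

theorem fracCover_le_volume_cthickening_div_homothety {K T : Set (EuclideanSpace ℝ (Fin n))}
    (hT : Convex ℝ T) (hTvol : volume T ≠ ⊤) {t₀ : EuclideanSpace ℝ (Fin n)} {r : ℝ}
    (hball : closedBall t₀ r ⊆ T) (hKT : Bornology.IsBounded (K - T)) {δ : ℝ} (hδ : 0 < δ)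
    (hδr : δ * √n < r) :
    fracCover K T ≤ volume (cthickening (δ * √n) (K - T)) /
      (ENNReal.ofReal ((1 - δ * √n / r) ^ n) * volume T) := by
  have hr : 0 < r := (by positivity : 0 ≤ δ * √n).trans_lt hδr
  have hc₁ : δ * √n / r < 1 := (div_lt_one hr).2 hδr
  have hU : volume (AffineMap.homothety t₀ (1 - δ * √n / r) '' T) =
      ENNReal.ofReal ((1 - δ * √n / r) ^ n) * volume T := by
    simp [abs_of_nonneg (pow_nonneg (sub_nonneg.2 hc₁.le) n)]
  rw [← hU]
  refine fracCover_le_volume_cthickening_div hKT hδ (fun y hy => ?_) ?_ ?_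
  · simpa [div_mul_cancel₀ _ hr.ne'] using
      hT.closedBall_subset_of_mem_homothety hr.le hball (by positivity) hc₁.le hy
  · rw [hU]
    exact mul_ne_zero (ENNReal.ofReal_pos.2 (pow_pos (sub_pos.2 hc₁) n)).ne'
      fun h => (measure_closedBall_pos volume t₀ hr).ne' (measure_mono_null hball h)
  · rw [hU]
    exact ENNReal.mul_ne_top ENNReal.ofReal_ne_top hTvol

theorem fracCover_volume_bound_general
    (n : ℕ) (K T : Set (EuclideanSpace ℝ (Fin n)))
    (hKcomp : IsCompact K)
    (hTcomp : IsCompact T) (hTconv : Convex ℝ T) (hTint : (interior T).Nonempty) :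
    fracCover K T ≤ volume (K - T) / volume T := by
  obtain ⟨t₀, ht₀⟩ := hTint
  obtain ⟨r, hr, hball⟩ := nhds_basis_closedBall.mem_iff.1 (mem_interior_iff_mem_nhds.1 ht₀)
  have hKT : IsCompact (K - T) := by simpa only [sub_eq_add_neg] using hKcomp.add hTcomp.neg
  have hT₀ : volume T ≠ 0 :=
    fun h => (measure_closedBall_pos volume t₀ hr).ne' (measure_mono_null hball h)
  have hscale : Tendsto (fun δ : ℝ => δ * √n) (𝓝[>] 0) (𝓝 0) :=
    ((continuous_mul_const _).tendsto' 0 0 (zero_mul _)).mono_left nhdsWithin_le_nhds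
  refine ge_of_tendsto ((tendsto_measure_cthickening_div hKT r n hT₀
    hTcomp.measure_lt_top.ne).comp hscale) ?_
  filter_upwards [self_mem_nhdsWithin, hscale.eventually (gt_mem_nhds hr)] with δ hδ hδr
  exact fracCover_le_volume_cthickening_div_homothety hTconv hTcomp.measure_lt_top.ne hball
    hKT.isBounded hδ hδr

/-- `N_ω(K, T) ≤ |K − T| / |T|`. -/
theorem fracCover_volume_bound
    (n : ℕ) (K T : Set (EuclideanSpace ℝ (Fin n)))
    (hKcomp : IsCompact K) (hKconv : Convex ℝ K) (hKint : (interior K).Nonempty)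
    (hTcomp : IsCompact T) (hTconv : Convex ℝ T) (hTint : (interior T).Nonempty) :
    fracCover K T ≤ volume (K - T) / volume T :=
  fracCover_volume_bound_general n K T hKcomp hTcomp hTconv hTint
end

section
/- Let K ⊆ ℝ^n be a convex body with 0 in its interior, and let 0 < λ < 1 and x ∈ ℝ^n be such that K ∩ (x−K) has nonempty interior. Then the fractional covering number satisfies N_ω(K, λK) ≤ ((1+λ)/λ)^n · |K| / |K ∩ (x−K)|. -/
open MeasureTheory Pointwise ENNReal NNReal

/-!
Write `Q = K ∩ (x - K)` and fix `0 < μ < λ`. As `Q` is convex and contains a ball of radius `ρ`,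
`μQ + B((λ - μ)ρ)` lies in a translate of `μQ + (λ - μ)Q = λQ ⊆ λK`.

Tile space by the translates `l + F` of the fundamental domain of a lattice of mesh at most `r`,
and put the weight `|F| / |μQ|` on every lattice point `l` within `r` of `K - μQ`. For `y ∈ K`
the tiles meeting `y - μQ` have total volume at least `|μQ|`, and their lattice points satisfy
`y ∈ l + μQ + B(r)`. So these weights form a fractional cover of `K` by translates of
`μQ + B(r)`, of total weight at most `|(K - μQ) + B(2r)| / |μQ|`, which tends to
`|K - μQ| / |μQ|` as `r → 0`. Finally `K - μQ` lies in a translate of `(1 + μ)K` because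
`x - Q ⊆ K`, so `N_ω(K, λK) ≤ ((1 + μ) / μ)^n |K| / |Q|` for every `μ < λ`; let `μ → λ`.
-/

open Metric Set Filter Module Submodule Topology

theorem Module.Basis.exists_sum_norm_le {E ι : Type*} [NormedAddCommGroup E] [NormedSpace ℝ E]
    [Fintype ι] (b₀ : Basis ι ℝ E) {r : ℝ} (hr : 0 < r) : ∃ b : Basis ι ℝ E, ∑ i, ‖b i‖ ≤ r := by
  set S := ∑ i, ‖b₀ i‖
  have hS : 0 ≤ S := Finset.sum_nonneg fun i _ => norm_nonneg (b₀ i)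
  have ht : 0 < r / (S + 1) := by positivity
  refine ⟨b₀.isUnitSMul fun _ => ht.ne'.isUnit, ?_⟩
  simp only [Basis.isUnitSMul_apply]
  rw [Finset.sum_congr rfl fun i _ => norm_smul_of_nonneg ht.le (b₀ i), ← Finset.mul_sum,
    div_mul_eq_mul_div, div_le_iff₀ (by positivity)]
  nlinarith

namespace ZSpan

variable {E ι : Type*} [NormedAddCommGroup E] [NormedSpace ℝ E] [Fintype ι] (b : Basis ι ℝ E)

theorem dist_floor_le (v : E) : dist v (floor b v) ≤ ∑ i, ‖b i‖ := by
  rw [dist_eq_norm, ← fract_apply]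
  exact norm_fract_le b v

theorem mem_vadd_fundamentalDomain_iff {l v : E} (hl : l ∈ span ℤ (range b)) :
    v ∈ l +ᵥ fundamentalDomain b ↔ l = floor b v := by
  rw [mem_vadd_set_iff_neg_vadd_mem, ← neg_inj, ← neg_neg (l : E)]
  have := vadd_mem_fundamentalDomain b ⟨-l, neg_mem hl⟩ v
  rw [Submodule.vadd_def, Subtype.ext_iff] at this
  simpa using this

variable [MeasurableSpace E] (μ : Measure E) [μ.IsAddLeftInvariant]

theorem measure_le_card_mul_measure_fundamentalDomain {A : Set E} {Z : Finset E}
    (hZ : ∀ v ∈ A, (floor b v : E) ∈ Z) : μ A ≤ Z.card * μ (fundamentalDomain b) :=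
  calc μ A ≤ μ (⋃ l ∈ Z, l +ᵥ fundamentalDomain b) := by
        refine measure_mono fun v hv => mem_biUnion (hZ v hv) ?_
        exact (mem_vadd_fundamentalDomain_iff b (floor b v).2).2 rfl
    _ ≤ ∑ l ∈ Z, μ (l +ᵥ fundamentalDomain b) := measure_biUnion_finset_le _ _
    _ = Z.card * μ (fundamentalDomain b) := by
        simp only [measure_vadd, Finset.sum_const, nsmul_eq_mul]

open scoped Classical in
theorem measure_le_card_filter_mul_measure_fundamentalDomain [BorelSpace E] [μ.IsNegInvariant]
    {K T : Set E} {J : Finset E} (hJ : ∀ l ∈ span ℤ (range b), l ∈ cthickening (∑ i, ‖b i‖) (K - T) → l ∈ J)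
    {x : E} (hx : x ∈ K) :
    μ T ≤ (J.filter fun l => x ∈ l +ᵥ (T + closedBall 0 (∑ i, ‖b i‖))).card
      * μ (fundamentalDomain b) := by
  rw [← Measure.measure_neg, ← measure_vadd μ x]
  refine measure_le_card_mul_measure_fundamentalDomain b μ fun v hv => ?_
  have hxv : x - v ∈ T := by
    rwa [mem_vadd_set_iff_neg_vadd_mem, Set.mem_neg, vadd_eq_add, neg_add_rev, neg_neg,
      ← sub_eq_neg_add] at hv
  have hlv := (dist_comm _ _).trans_le (dist_floor_le b v)
  refine Finset.mem_filter.2 ⟨hJ _ (floor b v).2 ?_, ?_⟩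
  · exact mem_cthickening_of_dist_le _ v _ _ ⟨x, hx, x - v, hxv, sub_sub_cancel x v⟩ hlv
  · refine (mem_vadd_set_iff_neg_vadd_mem).2 ⟨x - v, hxv, v - floor b v, ?_, ?_⟩
    · rwa [mem_closedBall_zero_iff, ← dist_eq_norm, dist_comm]
    · simp only [vadd_eq_add, sub_add_sub_cancel, neg_add_eq_sub]

theorem card_mul_measure_fundamentalDomain_le [BorelSpace E] {B : Set E} {Z : Finset E}
    (hZ : ∀ l ∈ Z, l ∈ span ℤ (range b)) (hB : ∀ l ∈ Z, l +ᵥ fundamentalDomain b ⊆ B) :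
    Z.card * μ (fundamentalDomain b) ≤ μ B := by
  have hdisj : (Z : Set E).PairwiseDisjoint (· +ᵥ fundamentalDomain b) := by
    intro l hl l' hl' hne
    refine Set.disjoint_left.2 fun v hv hv' => hne ?_
    rw [(mem_vadd_fundamentalDomain_iff b (hZ l hl)).1 hv,
      (mem_vadd_fundamentalDomain_iff b (hZ l' hl')).1 hv']
  calc Z.card * μ (fundamentalDomain b) = ∑ l ∈ Z, μ (l +ᵥ fundamentalDomain b) := by
        simp only [measure_vadd, Finset.sum_const, nsmul_eq_mul]
    _ = μ (⋃ l ∈ Z, l +ᵥ fundamentalDomain b) :=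
        (measure_biUnion_finset hdisj fun l _ =>
          (fundamentalDomain_measurableSet b).const_vadd l).symm
    _ ≤ μ B := measure_mono (iUnion₂_subset hB)

end ZSpan

section Convex

variable {E : Type*} [NormedAddCommGroup E] [NormedSpace ℝ E]

theorem Convex.smul_add_closedBall_subset {Q : Set E} (hQ : Convex ℝ Q) {q₀ : E} {ρ μ c : ℝ}
    (hball : closedBall q₀ ρ ⊆ Q) (hμ : 0 ≤ μ) (hc : 0 < c) :
    μ • Q + closedBall 0 (c * ρ) ⊆ -(c • q₀) +ᵥ (μ + c) • Q := by
  rintro _ ⟨_, ⟨q, hq, rfl⟩, u, hu, rfl⟩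
  rw [mem_closedBall_zero_iff] at hu
  have hq₀ : q₀ + c⁻¹ • u ∈ Q := hball <| by
    rwa [mem_closedBall, dist_self_add_left, norm_smul, Real.norm_of_nonneg (inv_nonneg.2 hc.le),
      inv_mul_le_iff₀ hc]
  rw [mem_vadd_set_iff_neg_vadd_mem, hQ.add_smul hμ hc.le]
  refine ⟨μ • q, smul_mem_smul_set hq, c • (q₀ + c⁻¹ • u), smul_mem_smul_set hq₀, ?_⟩
  simp only [smul_add, smul_inv_smul₀ hc.ne', neg_neg, vadd_eq_add]
  abel

theorem Convex.sub_smul_subset {K Q : Set E} (hK : Convex ℝ K) {x : E}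
    (hQ : Q ⊆ (fun k => x - k) '' K) {μ : ℝ} (hμ : 0 ≤ μ) :
    K - μ • Q ⊆ -(μ • x) +ᵥ (1 + μ) • K := by
  rintro _ ⟨k, hk, _, ⟨q, hq, rfl⟩, rfl⟩
  obtain ⟨k', hk', rfl⟩ := hQ hq
  rw [mem_vadd_set_iff_neg_vadd_mem, hK.add_smul zero_le_one hμ, one_smul]
  refine ⟨k, hk, μ • k', smul_mem_smul_set hk', ?_⟩
  simp only [neg_neg, vadd_eq_add, smul_sub]
  abel

end Convex

section FracCover

variable {n : ℕ} {K T : Set (EuclideanSpace ℝ (Fin n))}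

theorem fracCover_le_sum (J : Finset (EuclideanSpace ℝ (Fin n)))
    (w : EuclideanSpace ℝ (Fin n) → ℝ≥0) (hw : ∀ y ∈ J, 0 < w y)
    (hcov : ∀ x ∈ K, 1 ≤ ∑ y ∈ J, (y +ᵥ T).indicator (fun _ => w y) x) :
    fracCover K T ≤ ∑ y ∈ J, (w y : ℝ≥0∞) := by
  have hinj : Set.InjOn (fun y => (y, w y)) J := fun y _ y' _ h => congrArg Prod.fst h
  refine sInf_le ⟨J.image fun y => (y, w y), ?_, fun x hx => ?_, by rw [Finset.sum_image hinj]⟩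
  · simpa using hw
  · rw [Finset.sum_image hinj]
    have := NNReal.coe_le_coe.2 (hcov x hx)
    push_cast at this
    refine this.trans_eq (Finset.sum_congr rfl fun y _ => ?_)
    by_cases hy : x ∈ y +ᵥ T <;> simp [hy]

theorem fracCover_le_of_subset_vadd {T₁ T₂ : Set (EuclideanSpace ℝ (Fin n))}
    (v : EuclideanSpace ℝ (Fin n)) (h : T₁ ⊆ v +ᵥ T₂) : fracCover K T₂ ≤ fracCover K T₁ := by
  refine sInf_le_sInf ?_
  rintro _ ⟨S, hpos, hcov, rfl⟩
  have hinj : Set.InjOn (fun p : EuclideanSpace ℝ (Fin n) × ℝ≥0 => (p.1 + v, p.2)) S :=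
    fun p _ q _ h => Prod.ext (add_right_cancel (congrArg Prod.fst h)) (congrArg Prod.snd h :)
  refine ⟨S.image fun p => (p.1 + v, p.2), ?_, fun x hx => ?_, by rw [Finset.sum_image hinj]⟩
  · simp only [Finset.mem_image]
    rintro _ ⟨p, hp, rfl⟩
    exact hpos p hp
  · rw [Finset.sum_image hinj]
    refine (hcov x hx).trans (Finset.sum_le_sum fun p _ => ?_)
    have hsub : p.1 +ᵥ T₁ ⊆ (p.1 + v) +ᵥ T₂ := by
      rw [← vadd_vadd]
      exact vadd_set_mono h
    exact mul_le_mul_of_nonneg_left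
      (indicator_le_indicator_of_subset hsub (fun _ => zero_le_one) x) p.2.2

theorem fracCover_add_closedBall_sum_norm_le {ι : Type*} [Fintype ι]
    (b : Basis ι ℝ (EuclideanSpace ℝ (Fin n))) (hK : Bornology.IsBounded K)
    (hT : Bornology.IsBounded T) (hT0 : volume T ≠ 0) :
    fracCover K (T + closedBall 0 (∑ i, ‖b i‖))
      ≤ volume (cthickening (2 * ∑ i, ‖b i‖) (K - T)) / volume T := by
  classical
  set r := ∑ i, ‖b i‖
  set F := ZSpan.fundamentalDomain b
  have hJ := ZSpan.setFinite_inter b (s := cthickening r (K - T)) (hK.sub hT).cthickening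
  set J := hJ.toFinset
  have hF : volume F / volume T ≠ ⊤ :=
    div_ne_top (ZSpan.fundamentalDomain_isBounded b).measure_lt_top.ne hT0
  set w : ℝ≥0 := (volume F / volume T).toNNReal
  have hw : (w : ℝ≥0∞) = volume F / volume T := coe_toNNReal hF
  have hcov : ∀ x ∈ K,
      (1 : ℝ≥0) ≤ ∑ l ∈ J, (l +ᵥ (T + closedBall 0 r)).indicator (fun _ => w) x := by
    intro x hx
    rw [Finset.sum_indicator_eq_sum_filter, Finset.sum_const, nsmul_eq_mul, ← ENNReal.coe_le_coe]
    push_cast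
    rw [hw, ← mul_div_assoc, ENNReal.le_div_iff_mul_le (Or.inl hT0)
      (Or.inl hT.measure_lt_top.ne), one_mul]
    exact ZSpan.measure_le_card_filter_mul_measure_fundamentalDomain b volume
      (fun l hl hlKT => hJ.mem_toFinset.2 ⟨hlKT, hl⟩) hx
  have hw0 : 0 < w := toNNReal_pos (div_pos_iff.2
    ⟨ZSpan.measure_fundamentalDomain_ne_zero b, hT.measure_lt_top.ne⟩).ne' hF
  have hr : 0 ≤ r := Finset.sum_nonneg fun i _ => norm_nonneg (b i)
  calc fracCover K (T + closedBall 0 r) ≤ ∑ l ∈ J, (w : ℝ≥0∞) :=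
        fracCover_le_sum J (fun _ => w) (fun _ _ => hw0) hcov
    _ = J.card * volume F / volume T := by rw [Finset.sum_const, nsmul_eq_mul, hw, mul_div_assoc]
    _ ≤ volume (cthickening (2 * r) (K - T)) / volume T := by
        refine ENNReal.div_le_div_right (ZSpan.card_mul_measure_fundamentalDomain_le b volume
          (fun l hl => (hJ.mem_toFinset.1 hl).2) fun l hl u hu => ?_) _
        obtain ⟨hlKT, hlb⟩ := hJ.mem_toFinset.1 hl
        rw [two_mul]
        refine cthickening_cthickening_subset hr hr _ (mem_cthickening_of_dist_le u l r _ hlKT ?_)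
        rw [(ZSpan.mem_vadd_fundamentalDomain_iff b hlb).1 hu]
        exact ZSpan.dist_floor_le b u

theorem fracCover_add_closedBall_le (hK : Bornology.IsBounded K) (hT : Bornology.IsBounded T)
    (hT0 : volume T ≠ 0) {r : ℝ} (hr : 0 < r) :
    fracCover K (T + closedBall 0 r) ≤ volume (cthickening (2 * r) (K - T)) / volume T := by
  obtain ⟨b, hb⟩ := (EuclideanSpace.basisFun (Fin n) ℝ).toBasis.exists_sum_norm_le hr
  calc fracCover K (T + closedBall 0 r) ≤ fracCover K (T + closedBall 0 (∑ i, ‖b i‖)) :=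
        fracCover_le_of_subset_vadd 0 <| by
          rw [zero_vadd]
          exact add_subset_add_left (closedBall_subset_closedBall hb)
    _ ≤ volume (cthickening (2 * ∑ i, ‖b i‖) (K - T)) / volume T :=
        fracCover_add_closedBall_sum_norm_le b hK hT hT0
    _ ≤ volume (cthickening (2 * r) (K - T)) / volume T := by
        gcongr
        exact cthickening_mono (by linarith) _

theorem fracCover_le_volume_sub_div {S : Set (EuclideanSpace ℝ (Fin n))} (hK : IsCompact K)
    (hT : IsCompact T) (hT0 : volume T ≠ 0) {s : ℝ} (hs : 0 < s) (v : EuclideanSpace ℝ (Fin n))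
    (hTS : T + closedBall 0 s ⊆ v +ᵥ S) : fracCover K S ≤ volume (K - T) / volume T := by
  have hKT : IsCompact (K - T) := by
    rw [sub_eq_add_neg]
    exact hK.add hT.neg
  have hlim : Tendsto (fun r => volume (cthickening (2 * r) (K - T)) / volume T) (𝓝[>] 0)
      (𝓝 (volume (K - T) / volume T)) := by
    refine ENNReal.Tendsto.div_const ?_ (Or.inr hT0)
    refine ((tendsto_measure_cthickening_of_isCompact hKT).comp ?_).mono_left nhdsWithin_le_nhds
    simpa using (continuous_const_mul (2 : ℝ)).tendsto 0
  refine ge_of_tendsto hlim ?_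
  filter_upwards [Ioo_mem_nhdsGT hs] with r hr
  calc fracCover K S ≤ fracCover K (T + closedBall 0 r) :=
        fracCover_le_of_subset_vadd v
          ((add_subset_add_left (closedBall_subset_closedBall hr.2.le)).trans hTS)
    _ ≤ _ := fracCover_add_closedBall_le hK.isBounded hT.isBounded hT0 hr.1

theorem fracCover_smul_le_of_lt {K Q : Set (EuclideanSpace ℝ (Fin n))}
    {x q₀ : EuclideanSpace ℝ (Fin n)} {ρ μ lam : ℝ} (hK : IsCompact K) (hKconv : Convex ℝ K)
    (hQ : IsCompact Q) (hQconv : Convex ℝ Q) (hQK : Q ⊆ K) (hQx : Q ⊆ (fun k => x - k) '' K)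
    (hρ : 0 < ρ) (hball : closedBall q₀ ρ ⊆ Q) (hμ : 0 < μ) (hμlam : μ < lam) :
    fracCover K (lam • K) ≤ ENNReal.ofReal (((1 + μ) / μ) ^ n) * volume K / volume Q := by
  have hQ0 : volume Q ≠ 0 :=
    ((measure_closedBall_pos volume q₀ hρ).trans_le (measure_mono hball)).ne'
  have hμn : ENNReal.ofReal (μ ^ n) ≠ 0 := (ENNReal.ofReal_pos.2 (pow_pos hμ n)).ne'
  have hμQ : volume (μ • Q) = ENNReal.ofReal (μ ^ n) * volume Q := by
    rw [Measure.addHaar_smul_of_nonneg volume hμ.le, finrank_euclideanSpace_fin]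
  have hsub : μ • Q + closedBall 0 ((lam - μ) * ρ) ⊆ -((lam - μ) • q₀) +ᵥ lam • K := by
    refine (hQconv.smul_add_closedBall_subset hball hμ.le (sub_pos.2 hμlam)).trans ?_
    rw [add_sub_cancel]
    exact vadd_set_mono (smul_set_mono hQK)
  have hvol : volume (K - μ • Q) ≤ ENNReal.ofReal ((1 + μ) ^ n) * volume K := by
    refine (measure_mono (hKconv.sub_smul_subset hQx hμ.le)).trans_eq ?_
    rw [measure_vadd, Measure.addHaar_smul_of_nonneg volume (by linarith),
      finrank_euclideanSpace_fin]
  calc fracCover K (lam • K) ≤ volume (K - μ • Q) / volume (μ • Q) :=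
        fracCover_le_volume_sub_div hK (hQ.smul μ) (by rw [hμQ]; exact mul_ne_zero hμn hQ0)
          (mul_pos (sub_pos.2 hμlam) hρ) _ hsub
    _ ≤ ENNReal.ofReal ((1 + μ) ^ n) * volume K / (ENNReal.ofReal (μ ^ n) * volume Q) := by
        rw [hμQ]; gcongr
    _ = ENNReal.ofReal (((1 + μ) / μ) ^ n) * volume K / volume Q := by
        rw [ENNReal.mul_div_mul_comm (Or.inl hμn) (Or.inl ofReal_ne_top),
          ← ENNReal.ofReal_div_of_pos (pow_pos hμ n), div_pow, mul_div_assoc]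

end FracCover

theorem fracCover_smul_bound_general
    (n : ℕ) (K : Set (EuclideanSpace ℝ (Fin n)))
    (hKcomp : IsCompact K) (hKconv : Convex ℝ K)
    (lam : ℝ) (hlam0 : 0 < lam)
    (x : EuclideanSpace ℝ (Fin n))
    (hx : (interior (K ∩ ((fun k => x - k) '' K))).Nonempty) :
    fracCover K (lam • K)
      ≤ ENNReal.ofReal (((1 + lam) / lam) ^ n) * volume K
          / volume (K ∩ ((fun k => x - k) '' K)) := by
  set Q := K ∩ (fun k => x - k) '' K
  have hQ : IsCompact Q := hKcomp.inter_right (hKcomp.image (continuous_sub_left x)).isClosed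
  have hQconv : Convex ℝ Q :=
    hKconv.inter (hKconv.affine_image (AffineMap.const ℝ _ x - AffineMap.id ℝ _))
  have hQ0 : volume Q ≠ 0 := (Measure.measure_pos_of_nonempty_interior volume hx).ne'
  obtain ⟨q₀, hq₀⟩ := hx
  obtain ⟨ρ, hρ, hball⟩ := nhds_basis_closedBall.mem_iff.1 (mem_interior_iff_mem_nhds.1 hq₀)
  have hlim : Tendsto (fun μ => ENNReal.ofReal (((1 + μ) / μ) ^ n) * volume K / volume Q)
      (𝓝[<] lam) (𝓝 (ENNReal.ofReal (((1 + lam) / lam) ^ n) * volume K / volume Q)) := by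
    refine ENNReal.Tendsto.div_const
      (ENNReal.Tendsto.mul_const ?_ (Or.inr hKcomp.measure_lt_top.ne)) (Or.inr hQ0)
    refine (ENNReal.continuous_ofReal.tendsto _).comp
      ((ContinuousAt.tendsto ?_).mono_left nhdsWithin_le_nhds)
    exact ((continuousAt_const.add continuousAt_id).div continuousAt_id hlam0.ne').pow n
  refine ge_of_tendsto hlim ?_
  filter_upwards [Ioo_mem_nhdsLT hlam0] with μ hμ
  exact fracCover_smul_le_of_lt hKcomp hKconv hQ hQconv inter_subset_left inter_subset_right hρ
    hball hμ.1 hμ.2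

/-- `N_ω(K, λK) ≤ ((1+λ)/λ)^n |K| / |K ∩ (x − K)|`. -/
theorem fracCover_smul_bound
    (n : ℕ) (K : Set (EuclideanSpace ℝ (Fin n)))
    (hKcomp : IsCompact K) (hKconv : Convex ℝ K) (h0K : 0 ∈ interior K)
    (lam : ℝ) (hlam0 : 0 < lam) (hlam1 : lam < 1)
    (x : EuclideanSpace ℝ (Fin n))
    (hx : (interior (K ∩ ((fun k => x - k) '' K))).Nonempty) :
    fracCover K (lam • K)
      ≤ ENNReal.ofReal (((1 + lam) / lam) ^ n) * volume K
          / volume (K ∩ ((fun k => x - k) '' K)) :=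
  fracCover_smul_bound_general n K hKcomp hKconv lam hlam0 x hx
end

section
/- Let Q_n = [−1,1]^n and let X, Y be independent random vectors uniformly distributed on Q_n. Then E‖X+Y‖_{Q_n} = 2 − (2/(2n+1)) · 4^n · binom(2n,n)^{−1}. -/
/-!
The gauge of the cube is the sup norm, and the coordinates of `X + Y` are independent with the
triangular law `ν ∗ ν`, `ν` uniform on `[-1, 1]`, for which `P(|S| < t) = t (4 - t) / 4` on
`[0, 2]`. The layer-cake formula then gives `E ‖X + Y‖ = ∫₀² (1 - (t (4 - t) / 4) ^ n) dt`, and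
the symmetry `t ↦ 4 - t` followed by `t = 4 x` turns `∫₀² (t (4 - t) / 4) ^ n dt` into
`2 · 4 ^ n · B(n + 1, n + 1) = 2 · 4 ^ n · n! ² / (2 n + 1)!`.
-/

open MeasureTheory ProbabilityTheory Set
open scoped Nat ENNReal

theorem integral_pow_mul_one_sub_pow (m n : ℕ) :
    ∫ x in (0 : ℝ)..1, x ^ m * (1 - x) ^ n = (m ! : ℝ) * n ! / (m + n + 1)! := by
  have hbeta := Complex.betaIntegral_eq_Gamma_mul_div (m + 1) (n + 1)
    (by norm_cast; omega) (by norm_cast; omega)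
  rw [show (m + 1 + (n + 1) : ℂ) = ((m + n + 1 : ℕ) : ℂ) + 1 by push_cast; ring,
    Complex.Gamma_nat_eq_factorial, Complex.Gamma_nat_eq_factorial,
    Complex.Gamma_nat_eq_factorial, Complex.betaIntegral] at hbeta
  have hcpow : ∀ x : ℝ, (x : ℂ) ^ ((m : ℂ) + 1 - 1) * (1 - (x : ℂ)) ^ ((n : ℂ) + 1 - 1)
      = ((x ^ m * (1 - x) ^ n : ℝ) : ℂ) := by
    intro x
    simp only [add_sub_cancel_right, Complex.cpow_natCast]
    push_cast; ring
  simp only [hcpow, intervalIntegral.integral_ofReal] at hbeta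
  apply Complex.ofReal_injective
  rw [hbeta]; push_cast; rfl

theorem integral_tent_pow (n : ℕ) :
    ∫ t in (0 : ℝ)..2, (t * (4 - t) / 4) ^ n
      = 2 / (2 * n + 1) * 4 ^ n * ((2 * n).choose n : ℝ)⁻¹ := by
  set f : ℝ → ℝ := fun t => (t * (4 - t) / 4) ^ n
  have hf : Continuous f := by fun_prop
  have hsymm : ∫ t in (2 : ℝ)..4, f t = ∫ t in (0 : ℝ)..2, f t := by
    have h : ∫ t in (0 : ℝ)..2, f (4 - t) = ∫ t in (4 - 2 : ℝ)..(4 - 0), f t :=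
      intervalIntegral.integral_comp_sub_left f 4
    rw [show (4 : ℝ) - 2 = 2 by norm_num, sub_zero] at h
    rw [← h]
    congr 1 with t
    simp only [f]; ring_nf
  have hscale : ∫ t in (0 : ℝ)..4, f t = 4 * 4 ^ n * ((n ! : ℝ) * n ! / (2 * n + 1)!) := by
    have h : ∫ x in (0 : ℝ)..1, f (4 * x) = (4 : ℝ)⁻¹ • ∫ t in (4 * 0 : ℝ)..(4 * 1), f t :=
      intervalIntegral.integral_comp_mul_left f (by norm_num)
    rw [mul_zero, mul_one, smul_eq_mul, eq_inv_mul_iff_mul_eq₀ (by norm_num)] at h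
    have hf4 : ∀ x, f (4 * x) = 4 ^ n * (x ^ n * (1 - x) ^ n) := fun x => by
      simp only [f]
      rw [show 4 * x * (4 - 4 * x) / 4 = 4 * (x * (1 - x)) by ring, mul_pow, mul_pow]
    simp only [hf4, intervalIntegral.integral_const_mul, integral_pow_mul_one_sub_pow] at h
    rw [← h, two_mul]
    ring
  have hsplit : (∫ t in (0 : ℝ)..2, f t) + ∫ t in (2 : ℝ)..4, f t = ∫ t in (0 : ℝ)..4, f t :=
    intervalIntegral.integral_add_adjacent_intervals
      (hf.intervalIntegrable 0 2) (hf.intervalIntegrable 2 4)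
  have hchoose : ((2 * n + 1)! : ℝ) = (2 * n + 1) * (2 * n).choose n * n ! * n ! := by
    rw [Nat.factorial_succ, two_mul, ← Nat.add_choose_mul_factorial_mul_factorial]
    push_cast; ring
  rw [hsymm, hscale] at hsplit
  have : ((2 * n).choose n : ℝ) ≠ 0 := Nat.cast_ne_zero.2 (Nat.choose_pos (by omega)).ne'
  rw [show ∫ t in (0 : ℝ)..2, f t = 2 * 4 ^ n * ((n ! : ℝ) * n ! / (2 * n + 1)!) by linarith,
    hchoose]
  field_simp

lemma integral_min_add_one {t : ℝ} (ht0 : 0 ≤ t) (ht2 : t ≤ 2) :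
    ∫ x in (-1 : ℝ)..1, min (t + x) 1 = t * (4 - t) / 2 := by
  have hcont : Continuous fun x : ℝ => min (t + x) 1 := by fun_prop
  have hlow : ∫ x in (-1 : ℝ)..(1 - t), min (t + x) 1 = ∫ x in (-1 : ℝ)..(1 - t), (t + x) :=
    intervalIntegral.integral_congr fun x hx => by
      rw [uIcc_of_le (by linarith)] at hx
      exact min_eq_left (by linarith [hx.2])
  have hhigh : ∫ x in (1 - t)..1, min (t + x) 1 = ∫ x in (1 - t)..1, (1 : ℝ) :=
    intervalIntegral.integral_congr fun x hx => by
      rw [uIcc_of_le (by linarith)] at hx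
      exact min_eq_right (by linarith [hx.1])
  rw [← intervalIntegral.integral_add_adjacent_intervals (b := 1 - t)
    (hcont.intervalIntegrable _ _) (hcont.intervalIntegrable _ _), hlow, hhigh,
    intervalIntegral.integral_add intervalIntegrable_const intervalIntegral.intervalIntegrable_id,
    intervalIntegral.integral_const, intervalIntegral.integral_const, integral_id]
  simp only [smul_eq_mul]
  ring

lemma MeasureTheory.MeasurePreserving.map_cond_preimage {α β : Type*} [MeasurableSpace α]
    [MeasurableSpace β] {μ : Measure α} {ν : Measure β} {f : α → β} (hf : MeasurePreserving f μ ν)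
    {s : Set β} (hs : MeasurableSet s) : (μ[|f ⁻¹' s]).map f = ν[|s] := by
  rw [ProbabilityTheory.cond, ProbabilityTheory.cond, Measure.map_smul,
    ← Measure.restrict_map hf.measurable hs, hf.map_eq, hf.measure_preimage hs.nullMeasurableSet]

lemma MeasureTheory.Measure.pi_cond_univ_pi {ι : Type*} [Fintype ι] {α : ι → Type*}
    [∀ i, MeasurableSpace (α i)] (μ : ∀ i, Measure (α i)) [∀ i, SigmaFinite (μ i)]
    {s : ∀ i, Set (α i)} (hs : ∀ i, MeasurableSet (s i)) (hfin : ∀ i, μ i (s i) ≠ ∞) :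
    (Measure.pi μ)[|univ.pi s] = Measure.pi fun i => (μ i)[|s i] := by
  refine (Measure.pi_eq fun t ht => ?_).symm
  rw [cond_apply (.univ_pi hs), ← pi_inter_distrib, Measure.pi_pi, Measure.pi_pi,
    ENNReal.prod_inv_distrib fun i _ j _ _ => .inr (hfin j), ← Finset.prod_mul_distrib]
  simp only [cond_apply (hs _)]

theorem MeasureTheory.Measure.pi_conv_pi {ι M : Type*} [Fintype ι] [AddMonoid M] [MeasurableSpace M]
    [MeasurableAdd₂ M] (μ ν : ι → Measure M) [∀ i, IsFiniteMeasure (μ i)]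
    [∀ i, IsFiniteMeasure (ν i)] :
    Measure.pi μ ∗ Measure.pi ν = Measure.pi fun i => μ i ∗ ν i := by
  rw [Measure.conv, ← (measurePreserving_arrowProdEquivProdArrow M M ι μ ν).map_eq,
    Measure.map_map (by fun_prop) (MeasurableEquiv.measurable _)]
  exact Measure.pi_map_pi fun i => measurable_add.aemeasurable

lemma ae_abs_conv_le {μ ν : Measure ℝ} [SFinite μ] [SFinite ν] {a b : ℝ}
    (hμ : ∀ᵐ x ∂μ, |x| ≤ a) (hν : ∀ᵐ y ∂ν, |y| ≤ b) : ∀ᵐ z ∂μ ∗ ν, |z| ≤ a + b := by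
  rw [Measure.conv,
    ae_map_iff measurable_add.aemeasurable (measurableSet_le (by fun_prop) (by fun_prop))]
  filter_upwards [Measure.quasiMeasurePreserving_fst.ae hμ,
    Measure.quasiMeasurePreserving_snd.ae hν] with p hp₁ hp₂
  exact (abs_add_le _ _).trans (add_le_add hp₁ hp₂)

theorem integral_norm_pi_eq_integral_one_sub_pow {ι : Type*} [Fintype ι] (τ : Measure ℝ)
    [IsProbabilityMeasure τ] {M : ℝ} (hM : ∀ᵐ s ∂τ, |s| ≤ M) :
    ∫ x, ‖x‖ ∂(Measure.pi fun _ : ι => τ)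
      = ∫ t in (0 : ℝ)..M, 1 - τ.real {s | |s| < t} ^ Fintype.card ι := by
  obtain ⟨s, hs⟩ := hM.exists
  have hM0 : 0 ≤ M := (abs_nonneg s).trans hs
  have hbdd : ∀ᵐ x ∂(Measure.pi fun _ : ι => τ), ‖x‖ ≤ M := by
    filter_upwards [ae_all_iff.2 fun i => (Measure.quasiMeasurePreserving_eval _ i).ae hM]
      with x hx
    exact (pi_norm_le_iff_of_nonneg hM0).2 hx
  have hint : Integrable (fun x : ι → ℝ => ‖x‖) (Measure.pi fun _ : ι => τ) :=
    (integrable_const M).mono' continuous_norm.aestronglyMeasurable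
      (hbdd.mono fun x hx => by rwa [norm_norm])
  rw [hint.integral_eq_integral_Ioc_meas_le (ae_of_all _ norm_nonneg) hbdd,
    intervalIntegral.integral_of_le hM0]
  refine setIntegral_congr_fun measurableSet_Ioc fun t ht => ?_
  have hlt : {x : ι → ℝ | t ≤ ‖x‖} = (univ.pi fun _ => {s : ℝ | |s| < t})ᶜ := by
    ext x
    simp only [mem_ofPred_eq, mem_compl_iff, mem_univ_pi, ← Real.norm_eq_abs,
      ← pi_norm_lt_iff ht.1, not_lt]
  rw [hlt,
    probReal_compl_eq_one_sub (.univ_pi fun _ => measurableSet_lt (by fun_prop) (by fun_prop)),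
    measureReal_def, Measure.pi_pi, ENNReal.toReal_prod, Finset.prod_const, Finset.card_univ,
    measureReal_def]

instance isProbabilityMeasure_cond_Icc_neg_one_one :
    IsProbabilityMeasure (volume[|Icc (-1 : ℝ) 1]) :=
  cond_isProbabilityMeasure_of_finite (by simp) measure_Icc_lt_top.ne

lemma cond_Icc_apply_Ioo {c d : ℝ} (hcd : c < d) (a b : ℝ) :
    volume[|Icc c d] (Ioo a b) = ENNReal.ofReal ((min b d - max a c) / (d - c)) := by
  rw [cond_apply measurableSet_Icc, measure_congr (ae_eq_refl _ |>.inter Ioo_ae_eq_Icc),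
    Icc_inter_Icc, Real.volume_Icc, Real.volume_Icc, ENNReal.ofReal_div_of_pos (by linarith),
    ENNReal.div_eq_inv_mul, max_comm, min_comm]

lemma integral_cond_Icc {a b : ℝ} (hab : a < b) (f : ℝ → ℝ) :
    ∫ x, f x ∂volume[|Icc a b] = (b - a)⁻¹ * ∫ x in a..b, f x := by
  rw [ProbabilityTheory.cond, integral_smul_measure, Real.volume_Icc, ENNReal.toReal_inv,
    ENNReal.toReal_ofReal (by linarith), integral_Icc_eq_integral_Ioc,
    ← intervalIntegral.integral_of_le hab.le, smul_eq_mul]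

lemma cond_Icc_conv_self_abs_lt {t : ℝ} (ht0 : 0 ≤ t) (ht2 : t ≤ 2) :
    (volume[|Icc (-1 : ℝ) 1] ∗ volume[|Icc (-1 : ℝ) 1]) {s | |s| < t}
      = ENNReal.ofReal (t * (4 - t) / 4) := by
  set ν := volume[|Icc (-1 : ℝ) 1]
  set g : ℝ → ℝ := fun x => (min (t - x) 1 + min (t + x) 1) / 2
  have hS : MeasurableSet {p : ℝ × ℝ | |p.1 + p.2| < t} :=
    measurableSet_lt (by fun_prop) measurable_const
  have hslice : ∀ x, ν (Prod.mk x ⁻¹' {p : ℝ × ℝ | |p.1 + p.2| < t}) = ENNReal.ofReal (g x) := by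
    intro x
    have : Prod.mk x ⁻¹' {p : ℝ × ℝ | |p.1 + p.2| < t} = Ioo (-t - x) (t - x) := by
      ext y
      simp only [mem_preimage, mem_ofPred_eq, mem_Ioo, abs_lt]
      constructor <;> rintro ⟨h₁, h₂⟩ <;> constructor <;> linarith
    rw [this, cond_Icc_apply_Ioo (by norm_num), show -t - x = -(t + x) by ring, max_neg_neg]
    congr 1
    ring
  have hg_int : Integrable g ν :=
    ((by fun_prop : Continuous g).integrableOn_Icc).smul_measure (by simp)
  have hg_nonneg : 0 ≤ᵐ[ν] g := by
    refine ae_cond_of_forall_mem measurableSet_Icc fun x hx => ?_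
    simp only [Pi.zero_apply, g]
    rcases hx with ⟨hx₁, hx₂⟩
    rcases le_total (t - x) 1 with h₁ | h₁ <;> rcases le_total (t + x) 1 with h₂ | h₂ <;>
      simp only [min_eq_left, min_eq_right, h₁, h₂] <;> linarith
  have hg : ∫ x, g x ∂ν = t * (4 - t) / 4 := by
    have hneg : ∫ x in (-1 : ℝ)..1, min (t - x) 1 = ∫ x in (-1 : ℝ)..1, min (t + x) 1 := by
      simpa [sub_eq_add_neg] using
        intervalIntegral.integral_comp_neg (a := -1) (b := 1) fun x => min (t + x) 1
    rw [integral_cond_Icc (by norm_num), intervalIntegral.integral_div,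
      intervalIntegral.integral_add
      ((by fun_prop : Continuous fun x : ℝ => min (t - x) 1).intervalIntegrable _ _)
      ((by fun_prop : Continuous fun x : ℝ => min (t + x) 1).intervalIntegrable _ _), hneg,
      integral_min_add_one ht0 ht2]
    ring
  rw [Measure.conv, Measure.map_apply measurable_add (measurableSet_lt (by fun_prop) (by fun_prop)),
    preimage_ofPred_eq, Measure.prod_apply hS, lintegral_congr hslice,
    ← ofReal_integral_eq_lintegral_ofReal hg_int hg_nonneg, hg]

lemma gauge_preimage_linearEquiv {E F : Type*} [AddCommGroup E] [Module ℝ E] [AddCommGroup F]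
    [Module ℝ F] (f : E ≃ₗ[ℝ] F) (s : Set F) (x : E) : gauge (f ⁻¹' s) x = gauge s (f x) := by
  simp only [gauge_def', mem_preimage, map_smul]

lemma cube_eq_preimage_ofLp {ι : Type*} [Fintype ι] :
    {y : EuclideanSpace ℝ ι | ∀ i, |y i| ≤ 1} = WithLp.ofLp ⁻¹' univ.pi fun _ => Icc (-1) 1 := by
  ext y
  simp only [mem_ofPred_eq, mem_preimage, mem_univ_pi, mem_Icc, abs_le]

lemma gauge_cube {ι : Type*} [Fintype ι] (x : EuclideanSpace ℝ ι) :
    gauge {y : EuclideanSpace ℝ ι | ∀ i, |y i| ≤ 1} x = ‖WithLp.ofLp x‖ := by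
  have : (univ.pi fun _ => Icc (-1) 1 : Set (ι → ℝ)) = Metric.closedBall 0 1 := by
    ext y
    simp only [mem_univ_pi, mem_Icc, Metric.mem_closedBall, dist_zero_right,
      pi_norm_le_iff_of_nonneg zero_le_one, Real.norm_eq_abs, abs_le]
  rw [cube_eq_preimage_ofLp, this]
  exact (gauge_preimage_linearEquiv (WithLp.linearEquiv 2 ℝ (ι → ℝ)) _ x).trans
    ((gauge_closedBall zero_le_one _).trans (div_one _))

lemma map_ofLp_conv {ι : Type*} [Fintype ι] (μ ν : Measure (EuclideanSpace ℝ ι)) [SFinite μ]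
    [SFinite ν] : (μ ∗ ν).map WithLp.ofLp = μ.map WithLp.ofLp ∗ ν.map WithLp.ofLp :=
  Measure.map_conv_addMonoidHom (WithLp.linearEquiv 2 ℝ (ι → ℝ)).toAddMonoidHom
    (PiLp.volume_preserving_ofLp ι).measurable

lemma map_ofLp_cond_cube {ι : Type*} [Fintype ι] :
    (volume[|{y : EuclideanSpace ℝ ι | ∀ i, |y i| ≤ 1}]).map WithLp.ofLp
      = Measure.pi fun _ : ι => volume[|Icc (-1 : ℝ) 1] := by
  rw [cube_eq_preimage_ofLp, (PiLp.volume_preserving_ofLp ι).map_cond_preimage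
    (.univ_pi fun _ => measurableSet_Icc), volume_pi,
    Measure.pi_cond_univ_pi _ (fun _ => measurableSet_Icc) fun _ => measure_Icc_lt_top.ne]

instance isProbabilityMeasure_cond_cube {ι : Type*} [Fintype ι] :
    IsProbabilityMeasure (volume[|{y : EuclideanSpace ℝ ι | ∀ i, |y i| ≤ 1}]) :=
  ⟨by rw [← preimage_univ, ← Measure.map_apply (PiLp.volume_preserving_ofLp ι).measurable .univ,
    map_ofLp_cond_cube, measure_univ]⟩

/-- For `X, Y` independent uniform random vectors on the cube `Q_n = [−1,1]^n`,
`E‖X+Y‖_{Q_n} = 2 − (2/(2n+1)) · 4^n · (binom(2n, n))⁻¹`. -/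
theorem expected_gauge_sum_cube
    (n : ℕ) (Ω : Type*) [MeasurableSpace Ω] (μ : Measure Ω) [IsProbabilityMeasure μ]
    (Q : Set (EuclideanSpace ℝ (Fin n)))
    (hQ : Q = {x : EuclideanSpace ℝ (Fin n) | ∀ i, |x i| ≤ 1})
    (X Y : Ω → EuclideanSpace ℝ (Fin n))
    (hX : μ.map X = (volume Q)⁻¹ • volume.restrict Q)
    (hY : μ.map Y = (volume Q)⁻¹ • volume.restrict Q)
    (hindep : ProbabilityTheory.IndepFun X Y μ) :
    (∫ ω, gauge Q (X ω + Y ω) ∂μ)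
      = 2 - (2 / (2 * n + 1)) * 4 ^ n * ((2 * n).choose n : ℝ)⁻¹ := by
  subst hQ
  change μ.map X = volume[|_] at hX
  change μ.map Y = volume[|_] at hY
  set ν := volume[|Icc (-1 : ℝ) 1]
  have hXm : AEMeasurable X μ := .of_map_ne_zero (hX ▸ IsProbabilityMeasure.ne_zero _)
  have hYm : AEMeasurable Y μ := .of_map_ne_zero (hY ▸ IsProbabilityMeasure.ne_zero _)
  have hlaw : μ.map (fun ω => WithLp.ofLp (X ω + Y ω)) = Measure.pi fun _ : Fin n => ν ∗ ν := by
    rw [show (fun ω => WithLp.ofLp (X ω + Y ω)) = WithLp.ofLp ∘ (X + Y) from rfl,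
      ← (PiLp.volume_preserving_ofLp _).measurable.aemeasurable.map_map_of_aemeasurable
        (hXm.add hYm),
      hindep.map_add_eq_map_conv_map₀ hXm hYm, hX, hY, map_ofLp_conv, map_ofLp_cond_cube,
      Measure.pi_conv_pi]
  have hν : ∀ᵐ x ∂ν, |x| ≤ 1 := ae_cond_of_forall_mem measurableSet_Icc fun x hx => abs_le.2 hx
  have hνν : ∀ᵐ s ∂ν ∗ ν, |s| ≤ 2 := by
    simpa only [one_add_one_eq_two] using ae_abs_conv_le hν hν
  calc ∫ ω, gauge _ (X ω + Y ω) ∂μ = ∫ ω, ‖WithLp.ofLp (X ω + Y ω)‖ ∂μ := by simp_rw [gauge_cube]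
    _ = ∫ x, ‖x‖ ∂(Measure.pi fun _ : Fin n => ν ∗ ν) := by
      rw [← hlaw, integral_map (by fun_prop) continuous_norm.aestronglyMeasurable]
    _ = ∫ t in (0 : ℝ)..2, 1 - (ν ∗ ν).real {s | |s| < t} ^ n := by
      rw [integral_norm_pi_eq_integral_one_sub_pow _ hνν, Fintype.card_fin]
    _ = ∫ t in (0 : ℝ)..2, 1 - (t * (4 - t) / 4) ^ n := by
      refine intervalIntegral.integral_congr fun t ht => ?_
      rw [uIcc_of_le zero_le_two] at ht
      rw [measureReal_def, cond_Icc_conv_self_abs_lt ht.1 ht.2,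
        ENNReal.toReal_ofReal (by nlinarith [ht.1, ht.2])]
    _ = _ := by
      rw [intervalIntegral.integral_sub intervalIntegrable_const
        ((by fun_prop : Continuous fun t : ℝ => (t * (4 - t) / 4) ^ n).intervalIntegrable _ _),
        integral_tent_pow]
      simp
end

section
/- Let K, T₁, T₂ ⊆ ℝ^n be convex bodies. Then the covering number satisfies N(K, T₁ + T₂) ≤ N_ω(K, T₁) · (1 + ln N̄(K, T₂)), where N_ω is the fractional covering number and N̄ is the covering number by translates centered in K. -/
open MeasureTheory Pointwise ENNReal NNReal

/-- The covering number of `K` by translates of `B` (arbitrary centers). -/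
noncomputable def coverNum {n : ℕ} (K B : Set (EuclideanSpace ℝ (Fin n))) : ℝ≥0∞ :=
  sInf {w : ℝ≥0∞ | ∃ s : Finset (EuclideanSpace ℝ (Fin n)),
    K ⊆ (⋃ x ∈ s, x +ᵥ B) ∧ w = s.card}

/-- The covering number of `K` by translates of `B` with centers in `K`. -/
noncomputable def coverIn {n : ℕ} (K B : Set (EuclideanSpace ℝ (Fin n))) : ℝ≥0∞ :=
  sInf {w : ℝ≥0∞ | ∃ s : Finset (EuclideanSpace ℝ (Fin n)),
    ↑s ⊆ K ∧ K ⊆ (⋃ x ∈ s, x +ᵥ B) ∧ w = s.card}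

/-- Sum over a `biUnion` of a nonnegative function is at most the sum of sums. -/
lemma sum_biUnion_le_aux {α β : Type*} [DecidableEq α] (J : Finset β) (t : β → Finset α)
    (f : α → ℝ) (hf : ∀ x, 0 ≤ f x) :
    ∑ x ∈ J.biUnion t, f x ≤ ∑ j ∈ J, ∑ x ∈ t j, f x := by
  classical
  induction J using Finset.induction with
  | empty => simp
  | @insert j J hj ih =>
    rw [Finset.biUnion_insert, Finset.sum_insert hj]
    have h2 : 0 ≤ ∑ x ∈ t j ∩ J.biUnion t, f x :=
      Finset.sum_nonneg fun x _ => hf x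
    have h3 := Finset.sum_union_inter (s₁ := t j) (s₂ := J.biUnion t) (f := f)
    linarith

/-- Weighted counting: if every center set `A j` has weight at least 1 and
`J.card * (W-1)^m < W^m`, then `m` samples from `S` can hit every `A j`. -/
lemma exists_cover_fun {ι β : Type*} (S : Finset ι) (w : ι → ℝ)
    (hw : ∀ p, 0 ≤ w p) (J : Finset β) (A : β → Finset ι)
    (hA : ∀ j ∈ J, A j ⊆ S) (hA1 : ∀ j ∈ J, 1 ≤ ∑ p ∈ A j, w p)
    (m : ℕ)
    (hm : (J.card : ℝ) * (∑ p ∈ S, w p - 1) ^ m < (∑ p ∈ S, w p) ^ m) :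
    ∃ g : Fin m → ι, (∀ i, g i ∈ S) ∧ ∀ j ∈ J, ∃ i, g i ∈ A j := by
  classical
  by_contra hcon
  push_neg at hcon
  set W : ℝ := ∑ p ∈ S, w p with hW
  -- expand W^m as a sum over functions
  have hexp : ∀ T : Finset ι, (∑ p ∈ T, w p) ^ m
      = ∑ g ∈ Fintype.piFinset (fun _ : Fin m => T), ∏ i, w (g i) := by
    intro T
    rw [← Finset.prod_univ_sum]
    simp
  -- the bad inclusion
  have hincl : Fintype.piFinset (fun _ : Fin m => S) ⊆
      J.biUnion (fun j => Fintype.piFinset (fun _ : Fin m => S \ A j)) := by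
    intro g hg
    rw [Fintype.mem_piFinset] at hg
    obtain ⟨j, hjJ, hmiss⟩ := hcon g hg
    refine Finset.mem_biUnion.mpr ⟨j, hjJ, ?_⟩
    rw [Fintype.mem_piFinset]
    intro i
    exact Finset.mem_sdiff.mpr ⟨hg i, hmiss i⟩
  have hnn : ∀ g : Fin m → ι, 0 ≤ ∏ i, w (g i) :=
    fun g => Finset.prod_nonneg fun i _ => hw _
  have h1 : W ^ m ≤ ∑ j ∈ J, (∑ p ∈ S \ A j, w p) ^ m := by
    calc W ^ m = ∑ g ∈ Fintype.piFinset (fun _ : Fin m => S), ∏ i, w (g i) := hexp S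
      _ ≤ ∑ g ∈ J.biUnion (fun j => Fintype.piFinset (fun _ : Fin m => S \ A j)),
            ∏ i, w (g i) :=
          Finset.sum_le_sum_of_subset_of_nonneg hincl (fun g _ _ => hnn g)
      _ ≤ ∑ j ∈ J, ∑ g ∈ Fintype.piFinset (fun _ : Fin m => S \ A j), ∏ i, w (g i) :=
          sum_biUnion_le_aux _ _ _ hnn
      _ = ∑ j ∈ J, (∑ p ∈ S \ A j, w p) ^ m := by
          refine Finset.sum_congr rfl fun j _ => (hexp _).symm
  have h2 : ∀ j ∈ J, (∑ p ∈ S \ A j, w p) ^ m ≤ (W - 1) ^ m := by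
    intro j hj
    have hsd : ∑ p ∈ S \ A j, w p = W - ∑ p ∈ A j, w p := by
      rw [hW, eq_sub_iff_add_eq, Finset.sum_sdiff_eq_sub (hA j hj)]
      ring
    have h0 : 0 ≤ ∑ p ∈ S \ A j, w p := Finset.sum_nonneg fun p _ => hw p
    have : ∑ p ∈ S \ A j, w p ≤ W - 1 := by
      rw [hsd]; linarith [hA1 j hj]
    exact pow_le_pow_left₀ h0 this m
  have h3 : W ^ m ≤ (J.card : ℝ) * (W - 1) ^ m := by
    calc W ^ m ≤ ∑ j ∈ J, (∑ p ∈ S \ A j, w p) ^ m := h1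
      _ ≤ ∑ _j ∈ J, (W - 1) ^ m := Finset.sum_le_sum h2
      _ = (J.card : ℝ) * (W - 1) ^ m := by rw [Finset.sum_const, nsmul_eq_mul]
  linarith

/-- Choice of the number of samples. -/
lemma exists_good_m (W : ℝ) (hW : 1 ≤ W) (N : ℕ) (hN : 1 ≤ N) :
    ∃ m : ℕ, (N : ℝ) * (W - 1) ^ m < W ^ m ∧ (m : ℝ) ≤ W * (1 + Real.log N) := by
  have hlogN : 0 ≤ Real.log N := Real.log_natCast_nonneg N
  have hWpos : 0 < W := lt_of_lt_of_le one_pos hW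
  refine ⟨max 1 ⌈W * Real.log N⌉₊, ?_, ?_⟩
  · -- the core inequality
    set m := max 1 ⌈W * Real.log N⌉₊ with hm
    have hm1 : 1 ≤ m := le_max_left _ _
    have hmW : W * Real.log N ≤ (m : ℝ) := by
      calc W * Real.log N ≤ (⌈W * Real.log N⌉₊ : ℝ) := Nat.le_ceil _
        _ ≤ (m : ℝ) := by exact_mod_cast Nat.cast_le.mpr (le_max_right _ _)
    rcases eq_or_lt_of_le hW with hW1 | hW1
    · -- W = 1
      rw [← hW1]
      simp only [sub_self, one_pow]
      rw [zero_pow (by omega)]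
      norm_num
    · -- W > 1
      have h1W : (0:ℝ) < 1 - 1 / W := by
        rw [sub_pos, div_lt_one hWpos]; exact hW1
      have hlog : Real.log (1 - 1 / W) < -(1 / W) := by
        rw [Real.log_lt_iff_lt_exp h1W]
        have := Real.add_one_lt_exp (x := -(1 / W)) (neg_ne_zero.mpr (by positivity))
        linarith
      have hNpos : (0:ℝ) < N := by exact_mod_cast hN
      have key : (1 - 1 / W) ^ m < 1 / (N : ℝ) := by
        rw [← Real.log_lt_log_iff (by positivity) (by positivity), Real.log_pow,
          Real.log_div one_ne_zero (ne_of_gt hNpos), Real.log_one]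
        have hmpos : (0:ℝ) < m := by exact_mod_cast hm1
        have h1 : (m : ℝ) * Real.log (1 - 1 / W) < (m : ℝ) * (-(1 / W)) :=
          mul_lt_mul_of_pos_left hlog hmpos
        have h2 : Real.log N ≤ (m : ℝ) * (1 / W) := by
          rw [mul_one_div, le_div_iff₀ hWpos]
          linarith [hmW]
        linarith
      have hfac : W - 1 = W * (1 - 1 / W) := by field_simp
      rw [hfac, mul_pow]
      calc (N : ℝ) * (W ^ m * (1 - 1 / W) ^ m)
          < (N : ℝ) * (W ^ m * (1 / N)) := by
            apply mul_lt_mul_of_pos_left _ hNpos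
            exact mul_lt_mul_of_pos_left key (by positivity)
        _ = W ^ m := by field_simp
  · -- size bound
    rcases eq_or_lt_of_le hN with hN1 | hN1
    · simp only [← hN1]
      norm_num
      linarith
    · have hNlog : 0 < Real.log N := by
        apply Real.log_pos
        exact_mod_cast hN1
      have hpos : 0 < W * Real.log N := by positivity
      have : max 1 ⌈W * Real.log N⌉₊ = ⌈W * Real.log N⌉₊ :=
        max_eq_right (Nat.one_le_ceil_iff.mpr hpos)
      rw [this]
      have := Nat.ceil_lt_add_one (le_of_lt hpos)
      nlinarith

/-- `N(K, T₁ + T₂) ≤ N_ω(K, T₁) (1 + ln N̄(K, T₂))`, stated via any natural upper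
bound `N̄_0` of the covering number `N̄(K, T₂)`. -/
theorem coverNum_le_fracCover_mul_log
    (n : ℕ) (K T₁ T₂ : Set (EuclideanSpace ℝ (Fin n)))
    (hKcomp : IsCompact K) (hKconv : Convex ℝ K) (hKint : (interior K).Nonempty)
    (hT₁comp : IsCompact T₁) (hT₁conv : Convex ℝ T₁) (hT₁int : (interior T₁).Nonempty)
    (hT₂comp : IsCompact T₂) (hT₂conv : Convex ℝ T₂) (hT₂int : (interior T₂).Nonempty)
    (N₀ : ℕ) (hN₀ : coverIn K T₂ ≤ (N₀ : ℝ≥0∞)) :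
    coverNum K (T₁ + T₂) ≤ fracCover K T₁ * ENNReal.ofReal (1 + Real.log N₀) := by
  classical
  obtain ⟨x₀, hx₀⟩ : K.Nonempty := hKint.mono interior_subset
  -- extract a covering of K by translates of T₂ centered in K of size ≤ N₀
  have hlt : coverIn K T₂ < (N₀ : ℝ≥0∞) + 1 :=
    lt_of_le_of_lt hN₀ (ENNReal.lt_add_right (by simp) one_ne_zero)
  obtain ⟨w₂, hw₂mem, hw₂lt⟩ := sInf_lt_iff.mp hlt
  obtain ⟨s, hsK, hscov, rfl⟩ := hw₂mem
  have hcard : s.card ≤ N₀ := by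
    have h : s.card < N₀ + 1 := by exact_mod_cast hw₂lt
    omega
  have hsne : s.Nonempty := by
    by_contra h
    rw [Finset.not_nonempty_iff_eq_empty] at h
    subst h
    simpa using hscov hx₀
  have hscard1 : 1 ≤ s.card := hsne.card_pos
  have hN₀1 : 1 ≤ N₀ := le_trans hscard1 hcard
  have hlogN₀ : 0 ≤ Real.log N₀ := Real.log_natCast_nonneg N₀
  set c := ENNReal.ofReal (1 + Real.log N₀) with hc
  have hc0 : c ≠ 0 := by
    rw [hc]; simp only [ne_eq, ENNReal.ofReal_eq_zero, not_le]; linarith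
  have hcT : c ≠ ⊤ := ENNReal.ofReal_ne_top
  -- reduce to a bound for each fractional cover
  rw [fracCover]
  rw [← ENNReal.div_le_iff_le_mul (Or.inl hc0) (Or.inl hcT)]
  refine le_sInf fun w hw => ?_
  rw [ENNReal.div_le_iff_le_mul (Or.inl hc0) (Or.inl hcT)]
  obtain ⟨S, hSpos, hScov, rfl⟩ := hw
  set Wr : ℝ := ∑ p ∈ S, (p.2 : ℝ) with hWr
  have hwnn : ∀ p : (EuclideanSpace ℝ (Fin n)) × ℝ≥0, (0:ℝ) ≤ (p.2 : ℝ) :=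
    fun p => (p.2).coe_nonneg
  have hW1 : 1 ≤ Wr := by
    calc (1:ℝ) ≤ ∑ p ∈ S, (p.2 : ℝ) * (p.1 +ᵥ T₁).indicator 1 x₀ := hScov x₀ hx₀
      _ ≤ Wr := by
          refine Finset.sum_le_sum fun p _ => ?_
          by_cases h : x₀ ∈ p.1 +ᵥ T₁ <;> simp [Set.indicator_apply, h, hwnn p]
  -- choose m
  obtain ⟨m, hmcore, hmsize⟩ := exists_good_m Wr hW1 s.card hscard1
  -- the weight-1 sets
  set A : EuclideanSpace ℝ (Fin n) → Finset ((EuclideanSpace ℝ (Fin n)) × ℝ≥0) :=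
    fun y => S.filter (fun p => y ∈ p.1 +ᵥ T₁) with hA
  have hA1 : ∀ y ∈ s, 1 ≤ ∑ p ∈ A y, (p.2 : ℝ) := by
    intro y hy
    have hyK : y ∈ K := hsK hy
    have h1 := hScov y hyK
    have heq : ∑ p ∈ A y, (p.2 : ℝ)
        = ∑ p ∈ S, (p.2 : ℝ) * (p.1 +ᵥ T₁).indicator 1 y := by
      rw [hA, Finset.sum_filter]
      refine Finset.sum_congr rfl fun p _ => ?_
      by_cases h : y ∈ p.1 +ᵥ T₁ <;> simp [Set.indicator_apply, h]
    rw [heq]; exact h1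
  obtain ⟨g, hgS, hgcov⟩ := exists_cover_fun S (fun p => (p.2 : ℝ)) hwnn s A
    (fun j _ => Finset.filter_subset _ _) hA1 m hmcore
  -- the covering of K by translates of T₁ + T₂
  set t : Finset (EuclideanSpace ℝ (Fin n)) := Finset.image (fun i => (g i).1) Finset.univ with ht
  have hcover : K ⊆ ⋃ x ∈ t, x +ᵥ (T₁ + T₂) := by
    intro z hz
    obtain ⟨y, hys, hzy⟩ : ∃ y ∈ s, z ∈ y +ᵥ T₂ := by
      have := hscov hz
      simpa using this
    obtain ⟨i, hi⟩ := hgcov y hys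
    rw [hA, Finset.mem_filter] at hi
    obtain ⟨t₁, ht₁, hyt₁⟩ := hi.2
    obtain ⟨t₂, ht₂, hzt₂⟩ := hzy
    refine Set.mem_biUnion (Finset.mem_image.mpr ⟨i, Finset.mem_univ i, rfl⟩) ?_
    refine ⟨t₁ + t₂, Set.add_mem_add ht₁ ht₂, ?_⟩
    simp only [vadd_eq_add] at hyt₁ hzt₂ ⊢
    rw [← hzt₂, ← hyt₁]
    abel
  have h1 : coverNum K (T₁ + T₂) ≤ (t.card : ℝ≥0∞) := sInf_le ⟨t, hcover, rfl⟩
  have h2 : t.card ≤ m := le_trans Finset.card_image_le (by simp)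
  have h3 : (m : ℝ) ≤ Wr * (1 + Real.log N₀) := by
    have hlog_le : Real.log s.card ≤ Real.log N₀ := by
      apply Real.log_le_log (by exact_mod_cast hscard1)
      exact_mod_cast hcard
    calc (m : ℝ) ≤ Wr * (1 + Real.log s.card) := hmsize
      _ ≤ Wr * (1 + Real.log N₀) := by nlinarith
  have hwW : (∑ p ∈ S, (p.2 : ℝ≥0∞)) = ENNReal.ofReal Wr := by
    rw [hWr, ENNReal.ofReal_sum_of_nonneg (fun p _ => hwnn p)]
    refine Finset.sum_congr rfl fun p _ => ?_
    rw [ENNReal.ofReal_coe_nnreal]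
  calc coverNum K (T₁ + T₂) ≤ (t.card : ℝ≥0∞) := h1
    _ ≤ (m : ℝ≥0∞) := by exact_mod_cast h2
    _ ≤ ENNReal.ofReal (Wr * (1 + Real.log N₀)) := by
        rw [← ENNReal.ofReal_natCast m]
        exact ENNReal.ofReal_le_ofReal h3
    _ = ENNReal.ofReal Wr * c := by
        rw [hc, ENNReal.ofReal_mul (by linarith)]
    _ = (∑ p ∈ S, (p.2 : ℝ≥0∞)) * c := by rw [hwW]
end
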